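/- arXiv:1903.06589 — 10 statements merged into one kernel-verified Lean document; each statement's English description precedes it below -/
import Mathlib

section
/- For all n ≥ 2 and k ≥ 0, the number of permutations σ of [n] avoiding 123 and 132 with σ(n-1) = 1 and exactly k crossings equals C(n-2, k). -/
open Finset Polynomial

/-- A crossing of a permutation of [n] (0-based encoding of the 1-based definition):
`i < j < σ(i) < σ(j)` or `σ(i) < σ(j) ≤ i < j` (1-based). -/
def IsCross {n : ℕ} (σ : Equiv.Perm (Fin n)) (i j : Fin n) : Prop :=
  (i < j ∧ (j : ℕ) < (σ i : ℕ) ∧ σ i < σ j) ∨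
  (σ i < σ j ∧ (σ j : ℕ) ≤ (i : ℕ) ∧ i < j)

instance {n : ℕ} (σ : Equiv.Perm (Fin n)) (i j : Fin n) : Decidable (IsCross σ i j) := by
  unfold IsCross; infer_instance

/-- the number of crossings -/
def cr {n : ℕ} (σ : Equiv.Perm (Fin n)) : ℕ :=
  (Finset.univ.filter (fun p : Fin n × Fin n => IsCross σ p.1 p.2)).card

/-- occurrence of a length-3 pattern -/
def Contains3 {n : ℕ} (σ : Equiv.Perm (Fin n)) (τ : Fin 3 → Fin 3) : Prop :=
  ∃ i j l : Fin n, i < j ∧ j < l ∧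
    (τ 0 < τ 1 ↔ σ i < σ j) ∧ (τ 0 < τ 2 ↔ σ i < σ l) ∧ (τ 1 < τ 2 ↔ σ j < σ l)

instance {n : ℕ} (σ : Equiv.Perm (Fin n)) (τ : Fin 3 → Fin 3) :
    Decidable (Contains3 σ τ) := by
  unfold Contains3; infer_instance

def Avoids {n : ℕ} (σ : Equiv.Perm (Fin n)) (τ : Fin 3 → Fin 3) : Prop := ¬ Contains3 σ τ

instance {n : ℕ} (σ : Equiv.Perm (Fin n)) (τ : Fin 3 → Fin 3) : Decidable (Avoids σ τ) := by
  unfold Avoids; infer_instance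

def p123 : Fin 3 → Fin 3 := ![0, 1, 2]
def p132 : Fin 3 → Fin 3 := ![0, 2, 1]
def p213 : Fin 3 → Fin 3 := ![1, 0, 2]
def p231 : Fin 3 → Fin 3 := ![1, 2, 0]
def p312 : Fin 3 → Fin 3 := ![2, 0, 1]
def p321 : Fin 3 → Fin 3 := ![2, 1, 0]

/-!
Avoiding 123 and 132 means that no entry is followed by two larger ones. With `n = m + 2` and
0-based positions and values this forces `σ i ≥ m - i`, and together with `σ m = 0` it makes `σ`
a skew sum of blocks `(k-1, …, 2, 1, k)`, determined by the set `T ⊆ [0, m)` of positions with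
`σ i = m - i`; every such set occurs.

The pairs `i < j` with `σ i < σ j` are those where `i` lies in a block and `j` ends it, and such a
pair is a crossing exactly when some position outside `T ∪ {m}` is strictly closer to the centre
of `[0, m]` than `i`. Ordering `[0, m]` from the centre outwards, `cr σ` is thus the number of
elements of `T ∪ {m}` preceded by a gap. Toggling the initial run of `T` together with the first
gap is a bijection on subsets of `[0, m)` turning this statistic into the cardinality, so
exactly `C(m, k)` sets give `k` crossings.
-/

def NoTwoLargerAfter {n : ℕ} (σ : Equiv.Perm (Fin n)) : Prop :=
  ∀ i j l : Fin n, i < j → j < l → σ i < σ j → σ l ≤ σ i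

theorem avoids_123_and_132_iff {n : ℕ} (σ : Equiv.Perm (Fin n)) :
    Avoids σ p123 ∧ Avoids σ p132 ↔ NoTwoLargerAfter σ := by
  constructor
  · rintro ⟨h123, h132⟩ i j l hij hjl hj
    by_contra! hl
    rcases lt_or_gt_of_ne (σ.injective.ne hjl.ne) with hjl' | hjl'
    · exact h123 ⟨i, j, l, hij, hjl, iff_of_true (by decide) hj, iff_of_true (by decide) hl,
        iff_of_true (by decide) hjl'⟩
    · exact h132 ⟨i, j, l, hij, hjl, iff_of_true (by decide) hj, iff_of_true (by decide) hl,
        iff_of_false (by decide) hjl'.not_gt⟩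
  · intro h
    constructor <;>
    · rintro ⟨i, j, l, hij, hjl, hj, hl, -⟩
      exact (h i j l hij hjl (hj.1 (by decide))).not_gt (hl.1 (by decide))

/-- At most one of the `m + 1 - a` entries after position `a` exceeds `σ a`. -/
theorem NoTwoLargerAfter.sub_le {m : ℕ} {σ : Equiv.Perm (Fin (m + 2))}
    (hσ : NoTwoLargerAfter σ) (a : Fin (m + 2)) :
    m - a ≤ σ a := by
  have hlarger : #((Ioi a).filter fun j => σ a < σ j) ≤ 1 := by
    refine card_le_one.2 fun j hj l hl => ?_
    simp only [mem_filter, mem_Ioi] at hj hl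
    by_contra hne
    rcases lt_or_gt_of_ne hne with h | h
    · exact (hσ a j l hj.1 h hj.2).not_gt hl.2
    · exact (hσ a l j hl.1 h hl.2).not_gt hj.2
  have hsmaller : #((Ioi a).filter fun j => ¬ σ a < σ j) ≤ σ a := by
    rw [← Fin.card_Iio (σ a)]
    refine card_le_card_of_injOn σ (fun j hj => ?_) σ.injective.injOn
    simp only [coe_filter, mem_Ioi, coe_Iio, Set.mem_Iio] at hj ⊢
    exact lt_of_le_of_ne (not_lt.1 hj.2) (σ.injective.ne hj.1.ne')
  have := card_filter_add_card_filter_not (s := Ioi a) (fun j => σ a < σ j)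
  rw [Fin.card_Ioi] at this
  omega

section RunStart

variable {U : Finset ℕ}

def runStart (U : Finset ℕ) : ℕ → ℕ
  | 0 => 0
  | i + 1 => if i ∈ U then runStart U i else i + 1

theorem runStart_le (U : Finset ℕ) (i : ℕ) : runStart U i ≤ i := by
  induction i with
  | zero => exact le_rfl
  | succ i ih => rw [runStart]; split_ifs <;> omega

theorem runStart_le_iff {i j : ℕ} (hji : j ≤ i) :
    runStart U i ≤ j ↔ ∀ l, j ≤ l → l < i → l ∈ U := by
  induction i with
  | zero => simp [runStart]
  | succ i ih =>
    rcases hji.eq_or_lt with rfl | hji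
    · exact iff_of_true (runStart_le U _) fun l h1 h2 => absurd h2 (by omega)
    rw [runStart]
    split_ifs with hi
    · rw [ih (by omega)]
      refine ⟨fun h l h1 h2 => ?_, fun h l h1 h2 => h l h1 (by omega)⟩
      rcases (Nat.lt_succ_iff.1 h2).lt_or_eq with h2 | rfl
      exacts [h l h1 h2, hi]
    · exact iff_of_false (by omega) fun h => hi (h i (by omega) (by omega))

theorem mem_of_runStart_le {i l : ℕ} (h : runStart U i ≤ l) (hl : l < i) : l ∈ U :=
  (runStart_le_iff hl.le).1 h l le_rfl hl

theorem pred_runStart_notMem {i : ℕ} (h : 0 < runStart U i) : runStart U i - 1 ∉ U := by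
  intro hmem
  have hle : runStart U i ≤ runStart U i - 1 := by
    refine (runStart_le_iff (by have := runStart_le U i; omega)).2 fun l h1 h2 => ?_
    rcases h1.eq_or_lt with rfl | h1
    exacts [hmem, mem_of_runStart_le (by omega) h2]
  omega

theorem runStart_mono : Monotone (runStart U) := by
  intro i j hij
  by_cases h : runStart U j ≤ i
  · exact (runStart_le_iff h).2 fun l h1 h2 => mem_of_runStart_le h1 (by omega)
  · exact (runStart_le U i).trans (by omega)

theorem exists_runStart_le_of_notMem {a c : ℕ} (ha : a ∈ U) (hac : a < c) (hc : c ∉ U) :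
    ∃ b, a < b ∧ b ≤ c ∧ b ∉ U ∧ runStart U b ≤ a := by
  have hex : ∃ b, a < b ∧ b ∉ U := ⟨c, hac, hc⟩
  obtain ⟨hab, hb⟩ := Nat.find_spec hex
  refine ⟨Nat.find hex, hab, Nat.find_min' hex ⟨hac, hc⟩, hb,
    (runStart_le_iff hab.le).2 fun l h1 h2 => ?_⟩
  rcases h1.eq_or_lt with rfl | h1
  · exact ha
  · by_contra hl
    exact Nat.find_min hex h2 ⟨h1, hl⟩

end RunStart

section BlockPermutation

variable {m : ℕ} {T : Finset ℕ}

/-- Positions in `insert m T` get the least value `m - i` that avoidance allows; any other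
position `i` closes the run `[j, i)` of `insert m T` ending at it and gets `m + 1 - j`. Thus the
permutation is a skew sum of blocks of the shape `(k-1, …, 2, 1, k)`. -/
def blockValue (m : ℕ) (T : Finset ℕ) (i : ℕ) : ℕ :=
  if i ∈ insert m T then m - i else m + 1 - runStart (insert m T) i

theorem le_of_mem_insert (hT : T ⊆ range m) {i : ℕ} (hi : i ∈ insert m T) : i ≤ m := by
  rcases mem_insert.1 hi with rfl | hi
  · exact le_rfl
  · exact (mem_range.1 (hT hi)).le

theorem blockValue_le (i : ℕ) : blockValue m T i ≤ m + 1 := by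
  unfold blockValue; split_ifs <;> omega

theorem blockValue_self : blockValue m T m = 0 := by
  simp [blockValue]

theorem blockValue_eq_sub_iff {i : ℕ} (hi : i < m) : blockValue m T i = m - i ↔ i ∈ T := by
  have hiU : i ∈ insert m T ↔ i ∈ T := by simp [hi.ne]
  unfold blockValue
  split_ifs with h
  · exact iff_of_true rfl (hiU.1 h)
  · have := runStart_le (insert m T) i
    exact iff_of_false (by omega) (mt hiU.2 h)

theorem blockValue_lt_blockValue_iff (hT : T ⊆ range m) {i j : ℕ} (hij : i < j) :
    blockValue m T i < blockValue m T j ↔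
      i ∈ insert m T ∧ j ∉ insert m T ∧ runStart (insert m T) j ≤ i := by
  have hi := runStart_le (insert m T) i
  unfold blockValue
  split_ifs with hiU hjU hjU
  · exact iff_of_false (by omega) fun h => h.2.1 hjU
  · have := le_of_mem_insert hT hiU
    simp only [hiU, hjU, not_false_eq_true, true_and]
    omega
  · exact iff_of_false (by omega) fun h => hiU h.1
  · exact iff_of_false (by have := runStart_mono (U := insert m T) hij.le; omega)
      fun h => hiU h.1

theorem blockValue_ne_blockValue (hT : T ⊆ range m) {i j : ℕ} (hij : i < j) (hj : j ≤ m + 1) :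
    blockValue m T i ≠ blockValue m T j := by
  have hri := runStart_le (insert m T) i
  have hrj := runStart_le (insert m T) j
  unfold blockValue
  split_ifs with hiU hjU hjU
  · have := le_of_mem_insert hT hjU; omega
  · intro h
    have := le_of_mem_insert hT hiU
    have hpred := pred_runStart_notMem (U := insert m T) (i := j) (by omega)
    rw [show runStart (insert m T) j - 1 = i by omega] at hpred
    exact hpred hiU
  · have := le_of_mem_insert hT hjU; omega
  · intro h
    exact hiU (mem_of_runStart_le (i := j) (by omega) hij)

noncomputable def permOfSet (hT : T ⊆ range m) : Equiv.Perm (Fin (m + 2)) :=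
  Equiv.ofBijective (fun i => ⟨blockValue m T i, Nat.lt_succ_of_le (blockValue_le _)⟩) <|
    Finite.injective_iff_bijective.1 fun i j h => by
      by_contra hne
      rcases lt_or_gt_of_ne (Fin.val_injective.ne hne) with hij | hji
      · exact blockValue_ne_blockValue hT hij (by omega) (congrArg Fin.val h)
      · exact blockValue_ne_blockValue hT hji (by omega) (congrArg Fin.val h).symm

theorem permOfSet_apply (hT : T ⊆ range m) (i : Fin (m + 2)) :
    (permOfSet hT i : ℕ) = blockValue m T i := rfl

theorem noTwoLargerAfter_permOfSet (hT : T ⊆ range m) : NoTwoLargerAfter (permOfSet hT) := by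
  intro i j l hij hjl hj
  by_contra! hl
  simp only [Fin.lt_def, permOfSet_apply] at hij hjl hj hl
  have hj' := ((blockValue_lt_blockValue_iff hT hij).1 hj).2.1
  have hl' := ((blockValue_lt_blockValue_iff hT (hij.trans hjl)).1 hl).2.2
  exact hj' (mem_of_runStart_le (hl'.trans hij.le) hjl)

def lowSet (σ : Equiv.Perm (Fin (m + 2))) : Finset ℕ :=
  (range m).filter fun i => ∃ h : i < m + 2, (σ ⟨i, h⟩ : ℕ) = m - i

theorem lowSet_subset (σ : Equiv.Perm (Fin (m + 2))) : lowSet σ ⊆ range m :=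
  filter_subset _ _

theorem coe_mem_lowSet_iff {σ : Equiv.Perm (Fin (m + 2))} {i : Fin (m + 2)} :
    (i : ℕ) ∈ lowSet σ ↔ (i : ℕ) < m ∧ (σ i : ℕ) = m - i := by
  simp [lowSet]

theorem lowSet_permOfSet (hT : T ⊆ range m) : lowSet (permOfSet hT) = T := by
  ext i
  rw [lowSet, mem_filter, mem_range]
  simp only [permOfSet_apply]
  constructor
  · rintro ⟨hi, -, h⟩
    exact (blockValue_eq_sub_iff hi).1 h
  · intro hi
    have hi' := mem_range.1 (hT hi)
    exact ⟨hi', by omega, (blockValue_eq_sub_iff hi').2 hi⟩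

end BlockPermutation

section Classification

variable {m : ℕ}

theorem exists_lt_blockValue_eq (T : Finset ℕ) {i v : ℕ} (hv : m + 1 - i ≤ v) (hv' : v ≤ m + 1)
    (hvi : v ≠ m + 1 - runStart (insert m T) i) : ∃ i' < i, blockValue m T i' = v := by
  induction i with
  | zero => simp [runStart] at hvi; omega
  | succ i ih =>
    rw [runStart] at hvi
    by_cases hv_i : v = blockValue m T i
    · exact ⟨i, Nat.lt_succ_self i, hv_i.symm⟩
    have := runStart_le (insert m T) i
    unfold blockValue at hv_i
    split_ifs at hvi hv_i with hi
    · obtain ⟨i', hi', h⟩ := ih (by omega) hvi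
      exact ⟨i', by omega, h⟩
    · obtain ⟨i', hi', h⟩ := ih (by omega) hv_i
      exact ⟨i', by omega, h⟩

/-- By induction on the position: a value outside the low set is forced, since every other
candidate `≥ m + 1 - i` is taken by an earlier position. -/
theorem eq_permOfSet_lowSet {σ : Equiv.Perm (Fin (m + 2))} (hσ : NoTwoLargerAfter σ)
    (hm : (σ ⟨m, by omega⟩ : ℕ) = 0) : σ = permOfSet (lowSet_subset σ) := by
  have key : ∀ i (hi : i < m + 2), (σ ⟨i, hi⟩ : ℕ) = blockValue m (lowSet σ) i := by
    intro i
    induction i using Nat.strong_induction_on with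
    | _ i ih =>
      intro hi
      have hσi : (σ ⟨i, hi⟩ : ℕ) < m + 2 := (σ _).2
      by_cases hiU : i ∈ insert m (lowSet σ)
      · rw [blockValue, if_pos hiU]
        rcases mem_insert.1 hiU with rfl | hiT
        · simpa using hm
        · exact (coe_mem_lowSet_iff (i := ⟨i, hi⟩)).1 hiT |>.2
      have hne : (σ ⟨i, hi⟩ : ℕ) ≠ m - i := by
        intro h
        rcases lt_trichotomy i m with him | rfl | him
        · exact hiU (mem_insert_of_mem (coe_mem_lowSet_iff (i := ⟨i, hi⟩) |>.2 ⟨him, h⟩))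
        · exact hiU (mem_insert_self _ _)
        · have : (⟨i, hi⟩ : Fin (m + 2)) = ⟨m, by omega⟩ := σ.injective (Fin.ext (by omega))
          exact him.ne' (Fin.mk.inj_iff.1 this)
      have hlow : m - i ≤ σ ⟨i, hi⟩ := hσ.sub_le ⟨i, hi⟩
      by_contra hv
      obtain ⟨i', hi', h⟩ := exists_lt_blockValue_eq (m := m) (i := i) (lowSet σ)
        (v := σ ⟨i, hi⟩) (by omega) (by omega) (by rwa [blockValue, if_neg hiU] at hv)
      rw [← ih i' hi' (by omega)] at h
      exact hi'.ne (Fin.mk.inj_iff.1 (σ.injective (Fin.ext h)))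
  exact Equiv.ext fun i => Fin.ext (key i i.2)

end Classification

section Crossings

variable {m : ℕ} {T : Finset ℕ}

theorem isCross_permOfSet_iff (hT : T ⊆ range m) (a b : Fin (m + 2)) :
    IsCross (permOfSet hT) a b ↔
      (a : ℕ) < b ∧ (a : ℕ) ∈ insert m T ∧ (b : ℕ) ∉ insert m T ∧ runStart (insert m T) b ≤ a ∧
        ((b : ℕ) + a < m ∨ m + 1 ≤ a + runStart (insert m T) b) := by
  unfold IsCross
  simp only [Fin.lt_def, permOfSet_apply]
  constructor
  · rintro (⟨hab, hb, hasc⟩ | ⟨hasc, hb, hab⟩) <;>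
    · obtain ⟨ha, hbU, hrs⟩ := (blockValue_lt_blockValue_iff hT hab).1 hasc
      have := le_of_mem_insert hT ha
      simp only [blockValue, ha, hbU, if_true, if_false] at hb
      exact ⟨hab, ha, hbU, hrs, by omega⟩
  · rintro ⟨hab, ha, hbU, hrs, hcross⟩
    have hasc := (blockValue_lt_blockValue_iff hT hab).2 ⟨ha, hbU, hrs⟩
    have := le_of_mem_insert hT ha
    simp only [blockValue, ha, hbU, if_true, if_false] at hasc ⊢
    omega

theorem eq_of_isCross_permOfSet (hT : T ⊆ range m) {a b b' : Fin (m + 2)}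
    (h : IsCross (permOfSet hT) a b) (h' : IsCross (permOfSet hT) a b') : b = b' := by
  obtain ⟨hab, -, hb, hrs, -⟩ := (isCross_permOfSet_iff hT a b).1 h
  obtain ⟨hab', -, hb', hrs', -⟩ := (isCross_permOfSet_iff hT a b').1 h'
  by_contra hne
  rcases lt_or_gt_of_ne (Fin.val_injective.ne hne) with hlt | hlt
  · exact hb (mem_of_runStart_le (hrs'.trans hab.le) hlt)
  · exact hb' (mem_of_runStart_le (hrs.trans hab'.le) hlt)

/-- Ranks `0, …, m` by distance from the centre, so that the positions of rank at most that of
`a` form the interval `[a, m - 1 - a]` or `[m - a, a]` that decides whether `a` starts a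
crossing. -/
def centerRank (m a : ℕ) : ℕ := max (m - 2 * a) (2 * a + 1 - m)

theorem centerRank_injective (m : ℕ) : Function.Injective (centerRank m) := fun a b h => by
  unfold centerRank at h; omega

theorem exists_isCross_permOfSet_iff (hT : T ⊆ range m) (a : Fin (m + 2)) :
    (∃ b, IsCross (permOfSet hT) a b) ↔
      (a : ℕ) ∈ insert m T ∧ ∃ y ∈ range m \ T, centerRank m y < centerRank m a := by
  simp only [isCross_permOfSet_iff, mem_sdiff, mem_range]
  constructor
  · rintro ⟨b, hab, ha, hb, hrs, hcross⟩
    have ham := le_of_mem_insert hT ha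
    refine ⟨ha, ?_⟩
    rcases hcross with hcross | hcross
    · refine ⟨b, ⟨by omega, fun hbT => hb (mem_insert_of_mem hbT)⟩, ?_⟩
      unfold centerRank
      omega
    · have hpred := pred_runStart_notMem (U := insert m T) (i := b) (by omega)
      refine ⟨_, ⟨by omega, fun h => hpred (mem_insert_of_mem h)⟩, ?_⟩
      unfold centerRank
      omega
  · rintro ⟨ha, y, ⟨hym, hyT⟩, hy⟩
    have ham := le_of_mem_insert hT ha
    have hyU : y ∉ insert m T := by simp [hym.ne, hyT]
    have hya : y ≠ a := by rintro rfl; exact hyU ha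
    rcases lt_or_gt_of_ne hya with hya | hya
    · have hm1 : m + 1 ∉ insert m T := fun h => by have := le_of_mem_insert hT h; omega
      obtain ⟨b, hab, hbm, hb, hrs⟩ := exists_runStart_le_of_notMem ha (by omega) hm1
      have hyb : runStart (insert m T) b > y := by
        by_contra! h
        exact hyU (mem_of_runStart_le h (by omega))
      refine ⟨⟨b, by omega⟩, hab, ha, hb, hrs, Or.inr ?_⟩
      unfold centerRank at hy
      dsimp only
      omega
    · obtain ⟨b, hab, hby, hb, hrs⟩ := exists_runStart_le_of_notMem ha hya hyU
      refine ⟨⟨b, by omega⟩, hab, ha, hb, hrs, Or.inl ?_⟩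
      unfold centerRank at hy
      dsimp only
      omega

theorem cr_permOfSet (hT : T ⊆ range m) :
    cr (permOfSet hT) =
      #((insert m T).filter fun a => ∃ y ∈ range m \ T, centerRank m y < centerRank m a) := by
  calc cr (permOfSet hT)
      = #(univ.filter fun a : Fin (m + 2) => ∃ b, IsCross (permOfSet hT) a b) := by
        refine card_nbij Prod.fst (fun p hp => ?_) (fun p hp q hq hpq => ?_) (fun a ha => ?_)
        · simp only [mem_coe, mem_filter, mem_univ, true_and] at hp ⊢
          exact ⟨p.2, hp⟩
        · simp only [mem_coe, mem_filter, mem_univ, true_and] at hp hq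
          rw [← hpq] at hq
          exact Prod.ext hpq (eq_of_isCross_permOfSet hT hp hq)
        · simp only [mem_coe, mem_filter, mem_univ, true_and] at ha
          obtain ⟨b, hb⟩ := ha
          exact ⟨(a, b), by simpa using hb, rfl⟩
    _ = _ := by
        refine card_nbij Fin.val (fun a ha => ?_) Fin.val_injective.injOn (fun a ha => ?_)
        · simp only [mem_coe, mem_filter, mem_univ, true_and] at ha ⊢
          exact (exists_isCross_permOfSet_iff hT a).1 ha
        · simp only [mem_coe, mem_filter] at ha
          refine ⟨⟨a, by have := le_of_mem_insert hT ha.1; omega⟩, ?_, rfl⟩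
          simp only [mem_coe, mem_filter, mem_univ, true_and]
          exact (exists_isCross_permOfSet_iff hT _).2 ha

end Crossings

section InitialRunToggle

variable {α : Type*} [DecidableEq α] (r : α → ℕ) (X : Finset α)

/-- `W` with its initial run in the `r`-order and the first gap after that run toggled: the
elements of `W` preceded by a gap, together with the first gap. -/
def toggleInitialRun (W : Finset α) : Finset α :=
  X.filter fun a => (a ∈ W ↔ ∃ y ∈ X \ W, r y < r a)

def untoggleInitialRun (S : Finset α) : Finset α :=
  X.filter fun a => (a ∈ S ↔ ∃ y ∈ S, r y < r a)

variable {r X}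

theorem exists_lt_mem_toggleInitialRun_iff {W : Finset α} (a : α) :
    (∃ y ∈ toggleInitialRun r X W, r y < r a) ↔ ∃ y ∈ X \ W, r y < r a := by
  constructor
  · rintro ⟨y, hy, hya⟩
    rw [toggleInitialRun, mem_filter] at hy
    by_cases hyW : y ∈ W
    · obtain ⟨z, hz, hzy⟩ := hy.2.1 hyW
      exact ⟨z, hz, hzy.trans hya⟩
    · exact ⟨y, mem_sdiff.2 ⟨hy.1, hyW⟩, hya⟩
  · rintro ⟨y, hy, hya⟩
    obtain ⟨z, hz, hmin⟩ := ((X \ W).filter fun y => r y < r a).exists_min_image r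
      ⟨y, mem_filter.2 ⟨hy, hya⟩⟩
    rw [mem_filter, mem_sdiff] at hz
    refine ⟨z, mem_filter.2 ⟨hz.1.1, iff_of_false hz.1.2 ?_⟩, hz.2⟩
    rintro ⟨w, hw, hwz⟩
    exact (hmin w (mem_filter.2 ⟨hw, hwz.trans hz.2⟩)).not_gt hwz

theorem exists_lt_notMem_untoggleInitialRun_iff {S : Finset α} (hS : S ⊆ X) (a : α) :
    (∃ y ∈ X \ untoggleInitialRun r X S, r y < r a) ↔ ∃ y ∈ S, r y < r a := by
  constructor
  · rintro ⟨y, hy, hya⟩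
    simp only [untoggleInitialRun, mem_sdiff, mem_filter, not_and] at hy
    by_cases hyS : y ∈ S
    · exact ⟨y, hyS, hya⟩
    · obtain ⟨z, hz, hzy⟩ : ∃ z ∈ S, r z < r y := by
        by_contra h
        exact hy.2 hy.1 (iff_of_false hyS h)
      exact ⟨z, hz, hzy.trans hya⟩
  · rintro ⟨y, hy, hya⟩
    obtain ⟨z, hz, hmin⟩ := (S.filter fun y => r y < r a).exists_min_image r
      ⟨y, mem_filter.2 ⟨hy, hya⟩⟩
    rw [mem_filter] at hz
    refine ⟨z, mem_sdiff.2 ⟨hS hz.1, fun h => ?_⟩, hz.2⟩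
    obtain ⟨w, hw, hwz⟩ := ((mem_filter.1 h).2.1 hz.1)
    exact (hmin w (mem_filter.2 ⟨hw, hwz.trans hz.2⟩)).not_gt hwz

theorem untoggleInitialRun_toggleInitialRun {W : Finset α} (hW : W ⊆ X) :
    untoggleInitialRun r X (toggleInitialRun r X W) = W := by
  ext a
  by_cases ha : a ∈ X
  · rw [untoggleInitialRun, mem_filter, exists_lt_mem_toggleInitialRun_iff, toggleInitialRun,
      mem_filter]
    generalize (∃ y ∈ X \ W, r y < r a) = E
    tauto
  · simp only [untoggleInitialRun, mem_filter, ha, false_and, false_iff]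
    exact fun h => ha (hW h)

theorem toggleInitialRun_untoggleInitialRun {S : Finset α} (hS : S ⊆ X) :
    toggleInitialRun r X (untoggleInitialRun r X S) = S := by
  ext a
  by_cases ha : a ∈ X
  · rw [toggleInitialRun, mem_filter, exists_lt_notMem_untoggleInitialRun_iff hS,
      untoggleInitialRun, mem_filter]
    generalize (∃ y ∈ S, r y < r a) = E
    tauto
  · simp only [toggleInitialRun, mem_filter, ha, false_and, false_iff]
    exact fun h => ha (hS h)

theorem card_filter_card_toggleInitialRun_eq (k : ℕ) :
    #(X.powerset.filter fun W => #(toggleInitialRun r X W) = k) = X.card.choose k := by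
  rw [← card_powersetCard]
  refine card_nbij' (toggleInitialRun r X) (untoggleInitialRun r X) (fun W hW => ?_)
    (fun S hS => ?_) (fun W hW => ?_) (fun S hS => ?_)
  · rw [mem_coe, mem_filter] at hW
    exact mem_powersetCard.2 ⟨filter_subset _ _, hW.2⟩
  · rw [mem_coe, mem_powersetCard] at hS
    rw [mem_coe, mem_filter, mem_powerset, toggleInitialRun_untoggleInitialRun hS.1]
    exact ⟨filter_subset _ _, hS.2⟩
  · exact untoggleInitialRun_toggleInitialRun (mem_powerset.1 (mem_filter.1 hW).1)
  · exact toggleInitialRun_untoggleInitialRun (mem_powersetCard.1 hS).1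

theorem card_toggleInitialRun (hr : Set.InjOn r X) {W : Finset α} (hW : W ⊆ X) :
    #(toggleInitialRun r X W) =
      #(W.filter fun a => ∃ y ∈ X \ W, r y < r a) + if (X \ W).Nonempty then 1 else 0 := by
  have hsplit : toggleInitialRun r X W = W.filter (fun a => ∃ y ∈ X \ W, r y < r a) ∪
      (X \ W).filter fun a => ¬ ∃ y ∈ X \ W, r y < r a := by
    ext a
    simp only [toggleInitialRun, mem_filter, mem_union]
    generalize (∃ y ∈ X \ W, r y < r a) = E
    have := @hW a
    rw [mem_sdiff]
    tauto
  rw [hsplit,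
    card_union_of_disjoint (disjoint_sdiff.mono (filter_subset _ _) (filter_subset _ _))]
  congr 1
  split_ifs with hne
  · obtain ⟨z, hz, hmin⟩ := (X \ W).exists_min_image r hne
    refine le_antisymm (card_le_one.2 fun a ha b hb => ?_)
      (card_pos.2 ⟨z, mem_filter.2 ⟨hz, fun ⟨y, hy, hyz⟩ => (hmin y hy).not_gt hyz⟩⟩)
    rw [mem_filter, not_exists] at ha hb
    have hab : r a = r b := le_antisymm (not_lt.1 fun h => ha.2 b ⟨hb.1, h⟩)
      (not_lt.1 fun h => hb.2 a ⟨ha.1, h⟩)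
    exact hr (mem_sdiff.1 ha.1).1 (mem_sdiff.1 hb.1).1 hab
  · rw [not_nonempty_iff_eq_empty.1 hne, filter_empty, card_empty]

end InitialRunToggle

theorem cr_permOfSet_eq_card_toggleInitialRun {m : ℕ} {T : Finset ℕ} (hT : T ⊆ range m) :
    cr (permOfSet hT) = #(toggleInitialRun (centerRank m) (range m) T) := by
  have hmT : m ∉ T := fun h => (mem_range.1 (hT h)).false
  have hm : (∃ y ∈ range m \ T, centerRank m y < centerRank m m) ↔ (range m \ T).Nonempty :=
    ⟨fun ⟨y, hy, _⟩ => ⟨y, hy⟩, fun ⟨y, hy⟩ => ⟨y, hy, by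
      have := mem_range.1 (mem_sdiff.1 hy).1; unfold centerRank; omega⟩⟩
  rw [cr_permOfSet, card_toggleInitialRun (centerRank_injective m).injOn hT, filter_insert]
  by_cases h : (range m \ T).Nonempty
  · rw [if_pos (hm.2 h), if_pos h]
    exact card_insert_of_notMem fun h => hmT (mem_filter.1 h).1
  · rw [if_neg (mt hm.1 h), if_neg h, add_zero]

theorem card_filter_avoids_eq_card_filter_toggleInitialRun (m k : ℕ) :
    #(univ.filter fun σ : Equiv.Perm (Fin (m + 2)) =>
        Avoids σ p123 ∧ Avoids σ p132 ∧ (σ ⟨m, by omega⟩ : ℕ) = 0 ∧ cr σ = k) =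
      #((range m).powerset.filter fun T =>
        #(toggleInitialRun (centerRank m) (range m) T) = k) := by
  refine card_bij' (fun σ _ => lowSet σ)
    (fun T hT => permOfSet (mem_powerset.1 (mem_filter.1 hT).1)) (fun σ hσ => ?_)
    (fun T hT => ?_) (fun σ hσ => ?_) (fun T hT => lowSet_permOfSet _)
  · obtain ⟨-, h123, h132, hm, hk⟩ := mem_filter.1 hσ
    rw [mem_filter, mem_powerset, ← hk,
      eq_permOfSet_lowSet ((avoids_123_and_132_iff σ).1 ⟨h123, h132⟩) hm,
      cr_permOfSet_eq_card_toggleInitialRun, lowSet_permOfSet]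
    exact ⟨lowSet_subset σ, rfl⟩
  · obtain ⟨hT, hk⟩ := mem_filter.1 hT
    rw [mem_powerset] at hT
    have := (avoids_123_and_132_iff _).2 (noTwoLargerAfter_permOfSet hT)
    exact mem_filter.2 ⟨mem_univ _, this.1, this.2, blockValue_self,
      (cr_permOfSet_eq_card_toggleInitialRun hT).trans hk⟩
  · obtain ⟨-, h123, h132, hm, -⟩ := mem_filter.1 hσ
    exact (eq_permOfSet_lowSet ((avoids_123_and_132_iff σ).1 ⟨h123, h132⟩) hm).symm

theorem stmt4 (n k : ℕ) (hn : 2 ≤ n) :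
    (Finset.univ.filter (fun σ : Equiv.Perm (Fin n) =>
        Avoids σ p123 ∧ Avoids σ p132 ∧ (σ ⟨n - 2, by omega⟩ : ℕ) = 0 ∧ cr σ = k)).card
      = (n - 2).choose k := by
  obtain ⟨m, rfl⟩ : ∃ m, n = m + 2 := ⟨n - 2, by omega⟩
  refine (card_filter_avoids_eq_card_filter_toggleInitialRun m k).trans ?_
  rw [card_filter_card_toggleInitialRun_eq, card_range, Nat.add_sub_cancel]
end

section
/- For any permutation σ of [n], the permutation π = σ^{(n+1,1)} of [n+1] defined by π(i) = σ(i)+1 for i ≤ n and π(n+1) = 1 satisfies cr(π) = cr(σ) + ut(σ) − lt(σ), where ut(σ) = |{i : σ^{-1}(i) < i < σ(i)}| and lt(σ) = |{i : σ(i) < i < σ^{-1}(i)}|. -/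
open Finset Polynomial

/-- number of upper transients -/
def ut {n : ℕ} (σ : Equiv.Perm (Fin n)) : ℕ :=
  (Finset.univ.filter (fun i : Fin n => (σ.symm i : ℕ) < (i : ℕ) ∧ (i : ℕ) < (σ i : ℕ))).card

/-- number of lower transients -/
def lt' {n : ℕ} (σ : Equiv.Perm (Fin n)) : ℕ :=
  (Finset.univ.filter (fun i : Fin n => (σ i : ℕ) < (i : ℕ) ∧ (i : ℕ) < (σ.symm i : ℕ))).card

/-!
Every crossing of `π` involves two positions `i, j ≤ n`, and the values there are those of `σ`
shifted up by one. The shift leaves the strict comparisons between values unchanged and only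
moves the boundary of the comparisons between a position and a value: `j < σ(i)` becomes
`j ≤ σ(i)`, which gains the pairs with `j = σ(i)` and `i < σ(i) < σ(j)`, i.e. one pair for each
upper transient `σ(i)`; and `σ(j) ≤ i` becomes `σ(j) < i`, which loses the pairs with
`σ(j) = i` and `σ(i) < i < j`, i.e. one pair for each lower transient `i`.
-/

lemma cr_eq_sum {n : ℕ} (σ : Equiv.Perm (Fin n)) :
    cr σ = ∑ i, ∑ j, if IsCross σ i j then 1 else 0 := by
  rw [cr, card_filter, Fintype.sum_prod_type]

lemma not_isCross_last_left {n : ℕ} (π : Equiv.Perm (Fin (n + 1))) (j : Fin (n + 1)) :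
    ¬ IsCross π (Fin.last n) j := by
  rintro (⟨h, -⟩ | ⟨-, -, h⟩) <;> exact (Fin.le_last j).not_gt h

lemma not_isCross_castSucc_last {n : ℕ} (π : Equiv.Perm (Fin (n + 1)))
    (hπ : π (Fin.last n) = 0) (i : Fin n) : ¬ IsCross π i.castSucc (Fin.last n) := by
  rintro (⟨-, h, -⟩ | ⟨h, -⟩)
  · exact (π i.castSucc).is_le.not_gt h
  · exact Fin.not_lt_zero _ (hπ ▸ h)

lemma cr_eq_sum_castSucc {n : ℕ} (π : Equiv.Perm (Fin (n + 1))) (hπ : π (Fin.last n) = 0) :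
    cr π = ∑ i : Fin n, ∑ j : Fin n, if IsCross π i.castSucc j.castSucc then 1 else 0 := by
  rw [cr_eq_sum, Fin.sum_univ_castSucc]
  simp only [not_isCross_last_left, if_false, sum_const_zero, add_zero]
  refine sum_congr rfl fun i _ => ?_
  rw [Fin.sum_univ_castSucc]
  simp only [not_isCross_castSucc_last π hπ, if_false, add_zero]

lemma lt'_eq_sum {n : ℕ} (σ : Equiv.Perm (Fin n)) :
    lt' σ = ∑ i : Fin n, ∑ j : Fin n,
      if (σ i : ℕ) < i ∧ (i : ℕ) < j ∧ σ j = i then 1 else 0 := by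
  rw [lt', card_filter]
  refine sum_congr rfl fun i _ => ?_
  rw [sum_eq_single (σ.symm i)]
  · simp
  · rintro j - hj
    rw [if_neg]
    rintro ⟨-, -, rfl⟩
    exact hj (σ.symm_apply_apply j).symm
  · simp

lemma ut_eq_sum {n : ℕ} (σ : Equiv.Perm (Fin n)) :
    ut σ = ∑ i : Fin n, ∑ j : Fin n,
      if (i : ℕ) < σ i ∧ (σ i : ℕ) < σ j ∧ j = σ i then 1 else 0 := by
  rw [ut, card_filter, ← Equiv.sum_comp σ]
  refine sum_congr rfl fun i _ => ?_
  rw [sum_eq_single (σ i)]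
  · simp
  · rintro j - hj
    rw [if_neg]
    rintro ⟨-, -, rfl⟩
    exact hj rfl
  · simp

lemma isCross_castSucc_indicator_add {n : ℕ} (σ : Equiv.Perm (Fin n))
    (π : Equiv.Perm (Fin (n + 1))) (i j : Fin n)
    (hi : (π i.castSucc : ℕ) = σ i + 1) (hj : (π j.castSucc : ℕ) = σ j + 1) :
    ((if IsCross π i.castSucc j.castSucc then 1 else 0) +
        if (σ i : ℕ) < i ∧ (i : ℕ) < j ∧ σ j = i then 1 else 0 : ℕ) =
      (if IsCross σ i j then 1 else 0) +
        if (i : ℕ) < σ i ∧ (σ i : ℕ) < σ j ∧ j = σ i then 1 else 0 := by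
  simp only [IsCross, Fin.lt_def, Fin.ext_iff, Fin.val_castSucc, hi, hj]
  split_ifs <;> omega

theorem stmt5 (n : ℕ) (σ : Equiv.Perm (Fin n)) (π : Equiv.Perm (Fin (n + 1)))
    (h1 : ∀ i : Fin n, (π i.castSucc : ℕ) = (σ i : ℕ) + 1)
    (h2 : π (Fin.last n) = 0) :
    cr π + lt' σ = cr σ + ut σ := by
  rw [cr_eq_sum_castSucc π h2, lt'_eq_sum, cr_eq_sum, ut_eq_sum]
  simp only [← sum_add_distrib]
  exact sum_congr rfl fun i _ => sum_congr rfl fun j _ =>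
    isCross_castSucc_indicator_add σ π i j (h1 i) (h1 j)
end

section
/- For any permutation σ of [n] and π = σ^{-1}, cr(π) = cr(σ) + ut(σ) − lt(σ), where ut(σ) = |{i : σ^{-1}(i) < i < σ(i)}| and lt(σ) = |{i : σ(i) < i < σ^{-1}(i)}|. -/
open Finset Polynomial

/-! Read the arcs of `σ` as `i ↦ σ i`; the arcs of `π = σ⁻¹` are the same arcs reversed, so the
crossings of `π`, indexed by the pairs `(σ i, σ j)`, are the crossings of `σ` with the two kinds
(above and below the diagonal) exchanged. The kinds differ only in whether the boundary case
`j = σ i` resp. `σ j = i` is allowed: the pairs `i < j = σ i < σ j` are crossings of `π` but not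
of `σ`, and are the upper transients `j` of `σ`; the pairs `σ i < σ j = i < j` are crossings of
`σ` but not of `π`, and are the lower transients `i` of `σ`. -/

lemma Finset.card_filter_add_card_filter_of_disjoint {α : Type*} [Fintype α] [DecidableEq α]
    {P Q : α → Prop} [DecidablePred P] [DecidablePred Q] (h : ∀ a, P a → ¬ Q a) :
    #{a | P a} + #{a | Q a} = #{a | P a ∨ Q a} := by
  rw [filter_or, card_union_of_disjoint (disjoint_filter.2 fun a _ => h a)]

variable {n : ℕ}

def IsLowerTouch (σ : Equiv.Perm (Fin n)) (i j : Fin n) : Prop :=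
  σ i < i ∧ i < j ∧ σ j = i

def IsUpperTouch (σ : Equiv.Perm (Fin n)) (i j : Fin n) : Prop :=
  i < j ∧ σ i = j ∧ j < σ j

instance (σ : Equiv.Perm (Fin n)) (i j : Fin n) : Decidable (IsLowerTouch σ i j) := by
  unfold IsLowerTouch; infer_instance

instance (σ : Equiv.Perm (Fin n)) (i j : Fin n) : Decidable (IsUpperTouch σ i j) := by
  unfold IsUpperTouch; infer_instance

variable (σ : Equiv.Perm (Fin n))

lemma cr_inv_eq_card : cr σ⁻¹ = #{p : Fin n × Fin n | IsCross σ⁻¹ (σ p.1) (σ p.2)} :=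
  (card_equiv (σ.prodCongr σ) fun p => by simp).symm

lemma lt'_eq_card_isLowerTouch : lt' σ = #{p : Fin n × Fin n | IsLowerTouch σ p.1 p.2} := by
  refine card_bij' (fun i _ => (i, σ.symm i)) (fun p _ => p.1) ?_ ?_ (fun _ _ => rfl) ?_ <;>
    simp only [mem_filter, mem_univ, true_and]
  · intro i hi
    exact ⟨hi.1, hi.2, σ.apply_symm_apply i⟩
  · rintro ⟨i, j⟩ ⟨hσi, hij, hj : σ j = i⟩
    subst hj
    simpa using ⟨hσi, hij⟩
  · rintro ⟨i, j⟩ ⟨-, -, hj : σ j = i⟩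
    subst hj
    simp

lemma ut_eq_card_isUpperTouch : ut σ = #{p : Fin n × Fin n | IsUpperTouch σ p.1 p.2} := by
  refine card_bij' (fun j _ => (σ.symm j, j)) (fun p _ => p.2) ?_ ?_ (fun _ _ => rfl) ?_ <;>
    simp only [mem_filter, mem_univ, true_and]
  · intro j hj
    exact ⟨hj.1, σ.apply_symm_apply j, hj.2⟩
  · rintro ⟨i, j⟩ ⟨hij, hi : σ i = j, hσj⟩
    subst hi
    simpa using ⟨hij, hσj⟩
  · rintro ⟨i, j⟩ ⟨-, hi : σ i = j, -⟩
    subst hi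
    simp

lemma not_isLowerTouch_of_isCross_inv {i j : Fin n} (h : IsCross σ⁻¹ (σ i) (σ j)) :
    ¬ IsLowerTouch σ i j := by
  simp only [IsCross, IsLowerTouch, Equiv.Perm.coe_inv, Equiv.symm_apply_apply, Fin.lt_def,
    Fin.ext_iff] at h ⊢
  omega

lemma not_isUpperTouch_of_isCross {i j : Fin n} (h : IsCross σ i j) : ¬ IsUpperTouch σ i j := by
  simp only [IsCross, IsUpperTouch, Fin.lt_def, Fin.ext_iff] at h ⊢
  omega

lemma isCross_inv_or_isLowerTouch_iff (i j : Fin n) :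
    IsCross σ⁻¹ (σ i) (σ j) ∨ IsLowerTouch σ i j ↔ IsCross σ i j ∨ IsUpperTouch σ i j := by
  simp only [IsCross, IsLowerTouch, IsUpperTouch, Equiv.Perm.coe_inv, Equiv.symm_apply_apply,
    Fin.lt_def, Fin.ext_iff]
  omega

theorem stmt6 (n : ℕ) (σ : Equiv.Perm (Fin n)) :
    cr σ⁻¹ + lt' σ = cr σ + ut σ := by
  rw [cr_inv_eq_card, lt'_eq_card_isLowerTouch, ut_eq_card_isUpperTouch, cr,
    card_filter_add_card_filter_of_disjoint fun _ => not_isLowerTouch_of_isCross_inv σ,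
    card_filter_add_card_filter_of_disjoint fun _ => not_isUpperTouch_of_isCross σ]
  exact congrArg card (filter_congr fun p _ => isCross_inv_or_isLowerTouch_iff σ p.1 p.2)
end

section
/- For any permutation σ of [n] and π = rc(σ) its reverse-complement, defined by π(i) = n+1−σ(n+1−i), we have cr(π) = cr(σ) + ut(σ) − lt(σ), where ut(σ) = |{i : σ^{-1}(i) < i < σ(i)}| and lt(σ) = |{i : σ(i) < i < σ^{-1}(i)}|. -/
open Finset Polynomial

/-! Under `(i, j) ↦ (rev j, rev i)` a crossing of the reverse-complement becomes a crossing
condition on `σ` in which `j ≤ σ i` is weak and `σ j < i` is strict, while `cr σ` has them the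
other way round. The boundary cases `j = σ i` and `σ j = i` are pairs of arcs sharing an
endpoint, one per upper (resp. lower) transient. -/

section ReverseComplement

variable {n : ℕ}

def IsRevCross (σ : Equiv.Perm (Fin n)) (i j : Fin n) : Prop :=
  (i < j ∧ j ≤ σ i ∧ σ i < σ j) ∨ (σ i < σ j ∧ σ j < i ∧ i < j)

instance (σ : Equiv.Perm (Fin n)) (i j : Fin n) : Decidable (IsRevCross σ i j) := by
  unfold IsRevCross; infer_instance

def IsUpperChain (σ : Equiv.Perm (Fin n)) (i j : Fin n) : Prop :=
  i < j ∧ σ i = j ∧ j < σ j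

instance (σ : Equiv.Perm (Fin n)) (i j : Fin n) : Decidable (IsUpperChain σ i j) := by
  unfold IsUpperChain; infer_instance

def IsLowerChain (σ : Equiv.Perm (Fin n)) (i j : Fin n) : Prop :=
  σ i < i ∧ σ j = i ∧ i < j

instance (σ : Equiv.Perm (Fin n)) (i j : Fin n) : Decidable (IsLowerChain σ i j) := by
  unfold IsLowerChain; infer_instance

theorem isCross_iff_isRevCross_rev {σ π : Equiv.Perm (Fin n)}
    (h : ∀ i, π i = Fin.rev (σ (Fin.rev i))) (i j : Fin n) :
    IsCross π i j ↔ IsRevCross σ j.rev i.rev := by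
  have := (σ i.rev).is_lt
  have := (σ j.rev).is_lt
  simp only [IsCross, IsRevCross, h, Fin.lt_def, Fin.le_def, Fin.val_rev]
  omega

theorem cr_eq_card_isRevCross {σ π : Equiv.Perm (Fin n)}
    (h : ∀ i, π i = Fin.rev (σ (Fin.rev i))) :
    cr π = #{p : Fin n × Fin n | IsRevCross σ p.1 p.2} := by
  refine card_equiv ((Equiv.prodComm _ _).trans (Fin.revPerm.prodCongr Fin.revPerm)) fun p => ?_
  simp [isCross_iff_isRevCross_rev h]

theorem card_isRevCross_add_card_isLowerChain (σ : Equiv.Perm (Fin n)) :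
    #{p : Fin n × Fin n | IsRevCross σ p.1 p.2} + #{p : Fin n × Fin n | IsLowerChain σ p.1 p.2} =
      #{p : Fin n × Fin n | IsCross σ p.1 p.2} + #{p : Fin n × Fin n | IsUpperChain σ p.1 p.2} := by
  simp only [card_filter, ← sum_add_distrib]
  refine sum_congr rfl fun p _ => ?_
  simp only [IsRevCross, IsLowerChain, IsCross, IsUpperChain, Fin.lt_def, Fin.le_def, Fin.ext_iff]
  split_ifs <;> omega

theorem card_isUpperChain_eq_ut (σ : Equiv.Perm (Fin n)) :
    #{p : Fin n × Fin n | IsUpperChain σ p.1 p.2} = ut σ := by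
  refine card_nbij' Prod.snd (fun k => (σ.symm k, k)) ?_ ?_ ?_ ?_ <;>
    simp only [coe_filter, mem_univ, true_and, Set.mem_ofPred_eq, Set.MapsTo, Set.LeftInvOn,
      Prod.forall, Prod.mk.injEq, IsUpperChain, Equiv.apply_symm_apply, Fin.lt_def]
  · rintro i _ ⟨hi, rfl, hj⟩
    simpa using And.intro hi hj
  · exact fun _ hk => hk
  · rintro i _ ⟨-, rfl, -⟩
    simp
  · simp

theorem card_isLowerChain_eq_lt' (σ : Equiv.Perm (Fin n)) :
    #{p : Fin n × Fin n | IsLowerChain σ p.1 p.2} = lt' σ := by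
  refine card_nbij' Prod.fst (fun k => (k, σ.symm k)) ?_ ?_ ?_ ?_ <;>
    simp only [coe_filter, mem_univ, true_and, Set.mem_ofPred_eq, Set.MapsTo, Set.LeftInvOn,
      Prod.forall, Prod.mk.injEq, IsLowerChain, Equiv.apply_symm_apply, Fin.lt_def]
  · rintro _ j ⟨hi, rfl, hj⟩
    simpa using And.intro hi hj
  · exact fun _ hk => hk
  · rintro _ j ⟨-, rfl, -⟩
    simp
  · simp

end ReverseComplement

theorem stmt7 (n : ℕ) (σ π : Equiv.Perm (Fin n))
    (h : ∀ i : Fin n, π i = Fin.rev (σ (Fin.rev i))) :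
    cr π + lt' σ = cr σ + ut σ := by
  rw [cr_eq_card_isRevCross h, ← card_isLowerChain_eq_lt', ← card_isUpperChain_eq_ut]
  exact card_isRevCross_add_card_isLowerChain σ
end

section
/- The map φ_1 : S_n → S_{n+1} sending σ to (σ^{-1})^{(n+1,1)} (i.e. π(i) = σ^{-1}(i)+1 for i ≤ n, π(n+1) = 1) is a bijection from S_n onto the set of permutations of [n+1] ending with 1, and it preserves the number of crossings: cr(φ_1(σ)) = cr(σ) for all σ ∈ S_n. -/
open Finset Polynomial

/-! Position `σ i` of `φ σ` carries the value `i + 1`, so positions `σ i, σ j` cross in `φ σ`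
exactly when `i, j` cross in `σ`: the shift by one turns the strict `j < σ i` of one kind of
crossing into the weak `σ j ≤ i` of the other kind. The new last position is in no crossing,
being the largest position and carrying the smallest value. -/

open Equiv

variable {n : ℕ}

lemma IsCross.lt {σ : Perm (Fin n)} {i j : Fin n} (h : IsCross σ i j) : i < j := by
  rcases h with ⟨hij, -⟩ | ⟨-, -, hij⟩ <;> exact hij

lemma IsCross.apply_lt {σ : Perm (Fin n)} {i j : Fin n} (h : IsCross σ i j) : σ i < σ j := by
  rcases h with ⟨-, -, hσ⟩ | ⟨hσ, -⟩ <;> exact hσ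

lemma cr_eq_card_isCross_castSucc {π : Perm (Fin (n + 1))} (hπ : π (Fin.last n) = 0) :
    cr π = #{p : Fin n × Fin n | IsCross π p.1.castSucc p.2.castSucc} := by
  symm
  apply Finset.card_nbij (fun p => (p.1.castSucc, p.2.castSucc))
  · intro p hp
    simpa using hp
  · intro p _ q _ h
    simp only [Prod.mk.injEq, Fin.castSucc_inj] at h
    exact Prod.ext h.1 h.2
  · rintro ⟨a, b⟩ hab
    simp only [coe_filter, mem_univ, true_and, Set.mem_ofPred_eq] at hab
    have ha : a ≠ Fin.last n := (hab.lt.trans_le (Fin.le_last b)).ne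
    have hb : b ≠ Fin.last n := by
      rintro rfl
      exact Fin.not_lt_zero _ (hπ ▸ hab.apply_lt)
    exact ⟨(a.castPred ha, b.castPred hb), by simpa using hab, by simp⟩

lemma cr_eq_card_isCross_symm (σ : Perm (Fin n)) :
    cr σ = #{p : Fin n × Fin n | IsCross σ (σ.symm p.1) (σ.symm p.2)} :=
  Finset.card_equiv (σ.prodCongr σ) (by simp)

lemma isCross_castSucc_iff {σ : Perm (Fin n)} {π : Perm (Fin (n + 1))}
    (hπ : ∀ i : Fin n, (π i.castSucc : ℕ) = (σ.symm i : ℕ) + 1) (a b : Fin n) :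
    IsCross π a.castSucc b.castSucc ↔ IsCross σ (σ.symm a) (σ.symm b) := by
  simp only [IsCross, Fin.lt_def, Fin.val_castSucc, hπ, Equiv.apply_symm_apply]
  omega

lemma cr_eq_of_apply_castSucc {σ : Perm (Fin n)} {π : Perm (Fin (n + 1))}
    (hπ : ∀ i : Fin n, (π i.castSucc : ℕ) = (σ.symm i : ℕ) + 1) (hlast : π (Fin.last n) = 0) :
    cr π = cr σ := by
  rw [cr_eq_card_isCross_castSucc hlast, cr_eq_card_isCross_symm σ]
  simp only [isCross_castSucc_iff hπ]

lemma Equiv.Perm.ext_castSucc {π π' : Perm (Fin (n + 1))}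
    (hlast : π (Fin.last n) = π' (Fin.last n)) (h : ∀ i : Fin n, π i.castSucc = π' i.castSucc) :
    π = π' :=
  Equiv.ext (Fin.lastCases hlast h)

lemma exists_symm_apply_eq_pred {π : Perm (Fin (n + 1))} (hπ : π (Fin.last n) = 0) :
    ∃ σ : Perm (Fin n), ∀ i : Fin n, (π i.castSucc : ℕ) = (σ.symm i : ℕ) + 1 := by
  have hne : ∀ i : Fin n, π i.castSucc ≠ 0 := fun i h =>
    (Fin.castSucc_lt_last i).ne (π.injective (h.trans hπ.symm))
  let f : Fin n → Fin n := fun i => (π i.castSucc).pred (hne i)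
  have hf : Function.Injective f := fun i j hij =>
    Fin.castSucc_injective n (π.injective ((Fin.pred_inj (ha := hne i) (hb := hne j)).mp hij))
  refine ⟨(Equiv.ofBijective f (Finite.injective_iff_bijective.mp hf)).symm, fun i => ?_⟩
  rw [symm_symm, ofBijective_apply, ← Fin.val_succ, Fin.succ_pred]

/-- φ₁ : σ ↦ (σ⁻¹)^{(n+1,1)} is a crossing-preserving bijection from
`S_n` onto the permutations of `[n+1]` ending with 1. -/
theorem stmt8 (n : ℕ) (φ : Equiv.Perm (Fin n) → Equiv.Perm (Fin (n + 1)))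
    (hφ : ∀ σ : Equiv.Perm (Fin n),
      (∀ i : Fin n, (φ σ i.castSucc : ℕ) = (σ.symm i : ℕ) + 1) ∧ φ σ (Fin.last n) = 0) :
    Set.BijOn φ Set.univ {π : Equiv.Perm (Fin (n + 1)) | π (Fin.last n) = 0} ∧
    ∀ σ : Equiv.Perm (Fin n), cr (φ σ) = cr σ := by
  refine ⟨⟨fun σ _ => (hφ σ).2, ?_, ?_⟩, fun σ => cr_eq_of_apply_castSucc (hφ σ).1 (hφ σ).2⟩
  · intro σ _ τ _ h
    have hsymm : σ.symm = τ.symm := Equiv.ext fun i => Fin.ext <| by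
      have hσ := (hφ σ).1 i
      have hτ := (hφ τ).1 i
      rw [h] at hσ
      omega
    exact Equiv.symm_bijective.injective hsymm
  · intro π hπ
    obtain ⟨σ, hσ⟩ := exists_symm_apply_eq_pred hπ
    refine ⟨σ, Set.mem_univ σ, Perm.ext_castSucc ((hφ σ).2.trans hπ.symm) fun i => ?_⟩
    exact Fin.ext ((hφ σ).1 i ▸ (hσ i).symm)
end

section
/- The generating functions F(312; q, z) = ∑_{n≥0} ∑_{σ ∈ S_n(312)} q^{cr(σ)} z^n and F(231; q, z) = ∑_{n≥0} ∑_{σ ∈ S_n(231)} q^{cr(σ)} z^n satisfy F(312; q, z) · (1 − z·F(231; q, z)) = 1; equivalently, for all n ≥ 1, ∑_{σ ∈ S_n(312)} q^{cr(σ)} = ∑_{j=0}^{n-1} (∑_{α ∈ S_j(231)} q^{cr(α)})·(∑_{β ∈ S_{n-1-j}(312)} q^{cr(β)}). -/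
open Finset Polynomial

/-!
Let σ avoid 312 and put its minimum at position j. Every entry before position j is smaller than
every entry after it, since otherwise the two together with the minimum form a 312. So σ is the
concatenation of a permutation of the values 1, …, j, then 0, then a permutation of the values
j+1, …, n-1, and σ avoids 312 exactly when both blocks do. Writing the first block as the shift of
α⁻¹, the block avoids 312 iff α avoids 231. No crossing of σ involves the minimum or joins the two
blocks, and on the first block the shift by one and the inversion swap the two kinds of crossings,
so the crossings there correspond to those of α.
-/

open Equiv

section Patterns
variable {m n : ℕ}

lemma contains3_p312_iff (σ : Perm (Fin n)) :
    Contains3 σ p312 ↔ ∃ a b c, a < b ∧ b < c ∧ σ b < σ c ∧ σ c < σ a := by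
  refine ⟨fun ⟨a, b, c, hab, hbc, _, hac, hbc'⟩ => ⟨a, b, c, hab, hbc, hbc'.mp (by decide), ?_⟩,
    fun ⟨a, b, c, hab, hbc, h₁, h₂⟩ => ⟨a, b, c, hab, hbc, iff_of_false (by decide)
      (h₁.trans h₂).asymm, iff_of_false (by decide) h₂.asymm, iff_of_true (by decide) h₁⟩⟩
  exact (not_lt.mp fun h => absurd (hac.mpr h) (by decide)).lt_of_ne
    (σ.injective.ne (hab.trans hbc).ne')

lemma contains3_p231_iff (σ : Perm (Fin n)) :
    Contains3 σ p231 ↔ ∃ a b c, a < b ∧ b < c ∧ σ c < σ a ∧ σ a < σ b := by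
  refine ⟨fun ⟨a, b, c, hab, hbc, hab', hac, _⟩ => ⟨a, b, c, hab, hbc, ?_, hab'.mp (by decide)⟩,
    fun ⟨a, b, c, hab, hbc, h₁, h₂⟩ => ⟨a, b, c, hab, hbc, iff_of_true (by decide) h₂,
      iff_of_false (by decide) h₁.asymm, iff_of_false (by decide) (h₁.trans h₂).asymm⟩⟩
  exact (not_lt.mp fun h => absurd (hac.mpr h) (by decide)).lt_of_ne
    (σ.injective.ne (hab.trans hbc).ne')

lemma contains3_inv_p312_iff (σ : Perm (Fin n)) : Contains3 σ⁻¹ p312 ↔ Contains3 σ p231 := by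
  rw [contains3_p312_iff, contains3_p231_iff]
  constructor
  · rintro ⟨a, b, c, hab, hbc, h₁, h₂⟩
    exact ⟨σ⁻¹ b, σ⁻¹ c, σ⁻¹ a, h₁, h₂, by simpa using hab, by simpa using hbc⟩
  · rintro ⟨a, b, c, hab, hbc, h₁, h₂⟩
    exact ⟨σ c, σ a, σ b, h₁, h₂, by simpa using hab, by simpa using hbc⟩

lemma Contains3.of_strictMono {π : Perm (Fin m)} {σ : Perm (Fin n)} {f g : Fin m → Fin n}
    (hf : StrictMono f) (hg : StrictMono g) (hfg : ∀ i, σ (f i) = g (π i))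
    {τ : Fin 3 → Fin 3} (h : Contains3 π τ) : Contains3 σ τ := by
  obtain ⟨a, b, c, hab, hbc, h₁, h₂, h₃⟩ := h
  exact ⟨f a, f b, f c, hf hab, hf hbc, by simpa only [hfg, hg.lt_iff_lt],
    by simpa only [hfg, hg.lt_iff_lt], by simpa only [hfg, hg.lt_iff_lt]⟩

end Patterns

section Glue
variable {j k : ℕ} (α : Perm (Fin j)) (β : Perm (Fin k))

def glueFun (i : Fin (j + 1 + k)) : Fin (j + 1 + k) :=
  if h : (i : ℕ) < j then ⟨α.symm ⟨i, h⟩ + 1, by have := (α.symm ⟨i, h⟩).isLt; omega⟩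
  else if h' : (i : ℕ) = j then ⟨0, by omega⟩
  else ⟨j + 1 + β ⟨i - (j + 1), by omega⟩, by have := (β ⟨i - (j + 1), by omega⟩).isLt; omega⟩

lemma glueFun_injective : Function.Injective (glueFun α β) := by
  intro a b h
  simp only [glueFun] at h
  split_ifs at h <;> simp only [Fin.mk.injEq, Nat.add_right_cancel_iff, Nat.add_left_cancel_iff,
    Fin.val_inj, EmbeddingLike.apply_eq_iff_eq] at h <;> grind

/-- In one-line notation, `glue α β = (α⁻¹ + 1) 0 (β + j + 1)`. -/
noncomputable def glue : Perm (Fin (j + 1 + k)) :=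
  Equiv.ofBijective _ (Finite.injective_iff_bijective.mp (glueFun_injective α β))

variable {α β} {i : Fin (j + 1 + k)}

lemma glue_val_of_lt (h : (i : ℕ) < j) : (glue α β i : ℕ) = α.symm ⟨i, h⟩ + 1 := by
  simp [glue, glueFun, h]

lemma glue_val_of_eq (h : (i : ℕ) = j) : (glue α β i : ℕ) = 0 := by
  simp [glue, glueFun, h]

lemma glue_val_of_gt (h : j < (i : ℕ)) :
    (glue α β i : ℕ) = j + 1 + β ⟨i - (j + 1), by omega⟩ := by
  simp [glue, glueFun, h.not_gt, h.ne']

variable (α β)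

lemma glue_val_cases (i : Fin (j + 1 + k)) :
    ((i : ℕ) < j ∧ 0 < (glue α β i : ℕ) ∧ (glue α β i : ℕ) ≤ j) ∨
      ((i : ℕ) = j ∧ (glue α β i : ℕ) = 0) ∨ (j < (i : ℕ) ∧ j < (glue α β i : ℕ)) := by
  rcases lt_trichotomy (i : ℕ) j with h | h | h
  · grind [glue_val_of_lt h]
  · grind [glue_val_of_eq h]
  · grind [glue_val_of_gt h]

lemma glue_castLE (x : Fin j) :
    glue α β (Fin.castLE (by omega) x) = Fin.castLE (by omega) (α.symm x).succ :=
  Fin.ext (glue_val_of_lt x.isLt)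

lemma glue_natAdd (t : Fin k) : glue α β (Fin.natAdd (j + 1) t) = Fin.natAdd (j + 1) (β t) := by
  ext
  rw [glue_val_of_gt (by rw [Fin.val_natAdd]; omega)]
  simp

lemma glue_injective {α' : Perm (Fin j)} {β' : Perm (Fin k)} (h : glue α β = glue α' β') :
    α = α' ∧ β = β' := by
  refine ⟨Equiv.symm_bijective.injective (Equiv.ext fun x => ?_), Equiv.ext fun t => ?_⟩
  · simpa [glue_castLE] using congr($h (Fin.castLE (by omega) x))
  · simpa [glue_natAdd] using congr($h (Fin.natAdd (j + 1) t))

end Glue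

section Avoidance
variable {j k : ℕ} (α : Perm (Fin j)) (β : Perm (Fin k))

lemma contains3_glue_of_contains3_left (h : Contains3 α p231) : Contains3 (glue α β) p312 :=
  ((contains3_inv_p312_iff α).mpr h).of_strictMono (Fin.strictMono_castLE _)
    ((Fin.strictMono_castLE _).comp Fin.strictMono_succ) (glue_castLE α β)

lemma contains3_glue_of_contains3_right (h : Contains3 β p312) : Contains3 (glue α β) p312 :=
  h.of_strictMono (Fin.strictMono_natAdd _) (Fin.strictMono_natAdd _) (glue_natAdd α β)

lemma avoids_glue (hα : Avoids α p231) (hβ : Avoids β p312) : Avoids (glue α β) p312 := by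
  rw [Avoids, contains3_p312_iff]
  rintro ⟨a, b, c, hab, hbc, h₁, h₂⟩
  rw [Fin.lt_def] at hab hbc h₁ h₂
  have := glue_val_cases α β a
  have := glue_val_cases α β b
  have := glue_val_cases α β c
  by_cases hc : (c : ℕ) < j
  · apply hα
    rw [← contains3_inv_p312_iff, contains3_p312_iff]
    refine ⟨⟨a, by omega⟩, ⟨b, by omega⟩, ⟨c, hc⟩, hab, hbc, ?_, ?_⟩ <;>
      simp only [Fin.lt_def, Perm.inv_def] <;>
      grind [glue_val_of_lt]
  · apply hβ
    rw [contains3_p312_iff]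
    refine ⟨⟨a - (j + 1), by omega⟩, ⟨b - (j + 1), by omega⟩, ⟨c - (j + 1), by omega⟩,
      ?_, ?_, ?_, ?_⟩ <;>
      simp only [Fin.lt_def] <;>
      grind [glue_val_of_gt]

lemma avoids_glue_iff : Avoids (glue α β) p312 ↔ Avoids α p231 ∧ Avoids β p312 :=
  ⟨fun h => ⟨mt (contains3_glue_of_contains3_left α β) h,
    mt (contains3_glue_of_contains3_right α β) h⟩, fun h => avoids_glue α β h.1 h.2⟩

end Avoidance

section Crossings
variable {j k : ℕ} (α : Perm (Fin j)) (β : Perm (Fin k))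

lemma isCross_glue_castLE (a b : Fin j) :
    IsCross (glue α β) (Fin.castLE (by omega) (α a)) (Fin.castLE (by omega) (α b)) ↔
      IsCross α a b := by
  simp only [IsCross, glue_castLE, Equiv.symm_apply_apply, Fin.lt_def, Fin.val_castLE,
    Fin.val_succ]
  omega

lemma isCross_glue_natAdd (s t : Fin k) :
    IsCross (glue α β) (Fin.natAdd (j + 1) s) (Fin.natAdd (j + 1) t) ↔ IsCross β s t := by
  simp only [IsCross, glue_natAdd, Fin.lt_def, Fin.val_natAdd]
  omega

lemma lt_and_lt_or_gt_and_gt_of_isCross_glue {p q : Fin (j + 1 + k)}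
    (h : IsCross (glue α β) p q) : ((p : ℕ) < j ∧ (q : ℕ) < j) ∨ (j < (p : ℕ) ∧ j < (q : ℕ)) := by
  have := glue_val_cases α β p
  have := glue_val_cases α β q
  simp only [IsCross, Fin.lt_def] at h
  omega

lemma isCross_glue_iff {p q : Fin (j + 1 + k)} :
    IsCross (glue α β) p q ↔
      (∃ a b, IsCross α a b ∧ Fin.castLE (by omega) (α a) = p ∧ Fin.castLE (by omega) (α b) = q) ∨
        ∃ s t, IsCross β s t ∧ Fin.natAdd (j + 1) s = p ∧ Fin.natAdd (j + 1) t = q := by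
  constructor
  · intro h
    rcases lt_and_lt_or_gt_and_gt_of_isCross_glue α β h with ⟨hp, hq⟩ | ⟨hp, hq⟩
    · exact Or.inl ⟨α.symm ⟨p, hp⟩, α.symm ⟨q, hq⟩,
        (isCross_glue_castLE α β _ _).mp (by simpa using h), by simp, by simp⟩
    · refine Or.inr ⟨⟨p - (j + 1), by omega⟩, ⟨q - (j + 1), by omega⟩,
        (isCross_glue_natAdd α β _ _).mp ?_, Fin.ext ?_, Fin.ext ?_⟩
      · convert h using 1 <;> ext <;> simp only [Fin.val_natAdd] <;> omega
      all_goals simp only [Fin.val_natAdd]; omega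
  · rintro (⟨a, b, h, rfl, rfl⟩ | ⟨s, t, h, rfl, rfl⟩)
    · exact (isCross_glue_castLE α β a b).mpr h
    · exact (isCross_glue_natAdd α β s t).mpr h

lemma cr_glue : cr (glue α β) = cr α + cr β := by
  let L : Fin j ↪ Fin (j + 1 + k) := α.toEmbedding.trans (Fin.castLEEmb (by omega))
  let R : Fin k ↪ Fin (j + 1 + k) := Fin.natAddEmb (j + 1)
  have hdisj : Disjoint ((univ.filter fun p : Fin j × Fin j => IsCross α p.1 p.2).map (L.prodMap L))
      ((univ.filter fun p : Fin k × Fin k => IsCross β p.1 p.2).map (R.prodMap R)) := by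
    simp only [disjoint_left, mem_map, Prod.exists, Function.Embedding.coe_prodMap, Prod.map]
    rintro _ ⟨a, b, -, rfl⟩ ⟨s, t, -, h⟩
    have := congr_arg (fun p => (p.1 : ℕ)) h
    simp only [L, R, Function.Embedding.trans_apply, Fin.castLEEmb_apply, Fin.val_castLE,
      Fin.natAddEmb_apply, Fin.val_natAdd, Function.Embedding.coeFn_mk] at this
    omega
  have hcross :
      univ.filter (fun p : Fin (j + 1 + k) × Fin (j + 1 + k) => IsCross (glue α β) p.1 p.2) =
        ((univ.filter _).map (L.prodMap L)).disjUnion ((univ.filter _).map (R.prodMap R)) hdisj := by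
    ext ⟨p, q⟩
    simpa [L, R] using isCross_glue_iff α β
  rw [cr, hcross, card_disjUnion, card_map, card_map, cr, cr]

end Crossings

section BlockPerm
variable {n : ℕ}

noncomputable def blockPerm (σ : Perm (Fin n)) (a b m : ℕ) (ha : a + m ≤ n)
    (hσ : ∀ i : Fin m, b ≤ (σ ⟨a + i, by omega⟩ : ℕ) ∧ (σ ⟨a + i, by omega⟩ : ℕ) < b + m) :
    Perm (Fin m) :=
  Equiv.ofBijective (fun i => ⟨σ ⟨a + i, by omega⟩ - b, by have := hσ i; omega⟩)
    (Finite.injective_iff_bijective.mp fun x y hxy => by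
      have := hσ x
      have := hσ y
      simp only [Fin.mk.injEq] at hxy
      have := Fin.val_eq_of_eq (σ.injective (Fin.ext (by omega) :
        σ ⟨a + x, by omega⟩ = σ ⟨a + y, by omega⟩))
      exact Fin.ext (by simp only at this; omega))

lemma blockPerm_val (σ : Perm (Fin n)) (a b m : ℕ) (ha : a + m ≤ n)
    (hσ : ∀ i : Fin m, b ≤ (σ ⟨a + i, by omega⟩ : ℕ) ∧ (σ ⟨a + i, by omega⟩ : ℕ) < b + m)
    (i : Fin m) : (blockPerm σ a b m ha hσ i : ℕ) = σ ⟨a + i, by omega⟩ - b :=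
  rfl

end BlockPerm

section Decomposition
variable {j k : ℕ} {σ : Perm (Fin (j + 1 + k))}

lemma val_apply_pos (h0 : σ ⟨j, by omega⟩ = ⟨0, by omega⟩) {i : Fin (j + 1 + k)}
    (hi : (i : ℕ) ≠ j) : 0 < (σ i : ℕ) := by
  have : σ i ≠ σ ⟨j, by omega⟩ := σ.injective.ne (Fin.ne_of_val_ne hi)
  rw [h0] at this
  exact Nat.pos_of_ne_zero fun h => this (Fin.ext h)

lemma apply_lt_apply_of_avoids (hσ : Avoids σ p312) (h0 : σ ⟨j, by omega⟩ = ⟨0, by omega⟩)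
    {i l : Fin (j + 1 + k)} (hi : (i : ℕ) < j) (hl : j < (l : ℕ)) : σ i < σ l := by
  refine (le_of_not_gt fun hli => hσ ?_).lt_of_ne (σ.injective.ne (Fin.ne_of_val_ne (by omega)))
  refine (contains3_p312_iff σ).mpr ⟨i, ⟨j, by omega⟩, l, hi, hl, ?_, hli⟩
  rw [h0, Fin.lt_def]
  exact val_apply_pos h0 hl.ne'

lemma val_apply_le_of_avoids (hσ : Avoids σ p312) (h0 : σ ⟨j, by omega⟩ = ⟨0, by omega⟩)
    {i : Fin (j + 1 + k)} (hi : (i : ℕ) < j) : (σ i : ℕ) ≤ j := by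
  have := card_le_card_of_injOn σ (s := Ioi ⟨j, by omega⟩) (t := Ioi (σ i))
    (fun l hl => by simpa using apply_lt_apply_of_avoids hσ h0 hi (by simpa [Fin.lt_def] using hl))
    σ.injective.injOn
  simp only [Fin.card_Ioi] at this
  omega

lemma lt_val_apply_of_avoids (hσ : Avoids σ p312) (h0 : σ ⟨j, by omega⟩ = ⟨0, by omega⟩)
    {l : Fin (j + 1 + k)} (hl : j < (l : ℕ)) : j < (σ l : ℕ) := by
  have := card_le_card_of_injOn σ (s := Iic ⟨j, by omega⟩) (t := Iio (σ l))
    (fun i hi => by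
      rcases (Fin.le_def.mp (mem_Iic.mp hi)).lt_or_eq with hi | hi
      · simpa using apply_lt_apply_of_avoids hσ h0 hi hl
      · rw [mem_coe, mem_Iio, Fin.ext hi, h0, Fin.lt_def]
        exact val_apply_pos h0 hl.ne')
    σ.injective.injOn
  simp only [Fin.card_Iic, Fin.card_Iio] at this
  omega

lemma exists_glue_eq_of_avoids (hσ : Avoids σ p312) (h0 : σ ⟨j, by omega⟩ = ⟨0, by omega⟩) :
    ∃ α β, glue α β = σ := by
  have hpre (i : Fin j) : 1 ≤ (σ ⟨0 + i, by omega⟩ : ℕ) ∧ (σ ⟨0 + i, by omega⟩ : ℕ) < 1 + j :=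
    ⟨val_apply_pos h0 (by rw [Fin.val_mk]; omega), Nat.lt_one_add_iff.mpr
      (val_apply_le_of_avoids hσ h0 (i := ⟨0 + i, by omega⟩) (by rw [Fin.val_mk]; omega))⟩
  have hsuf (t : Fin k) :
      j + 1 ≤ (σ ⟨j + 1 + t, by omega⟩ : ℕ) ∧ (σ ⟨j + 1 + t, by omega⟩ : ℕ) < j + 1 + k :=
    ⟨lt_val_apply_of_avoids hσ h0 (by rw [Fin.val_mk]; omega), (σ _).isLt⟩
  refine ⟨(blockPerm σ 0 1 j (by omega) hpre)⁻¹, blockPerm σ (j + 1) (j + 1) k le_rfl hsuf, ?_⟩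
  ext i
  rcases lt_trichotomy (i : ℕ) j with h | h | h
  · rw [glue_val_of_lt h, Perm.inv_def, symm_symm, blockPerm_val]
    have := hpre ⟨i, h⟩
    simp only [zero_add, Fin.eta] at this ⊢
    omega
  · rw [glue_val_of_eq h, show i = ⟨j, by omega⟩ from Fin.ext h, h0]
  · rw [glue_val_of_gt h, blockPerm_val]
    have := hsuf ⟨i - (j + 1), by omega⟩
    simp only [show j + 1 + (i - (j + 1)) = i by omega, Fin.eta] at this ⊢
    omega

end Decomposition

noncomputable def crossingPoly (τ : Fin 3 → Fin 3) (n : ℕ) : ℤ[X] :=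
  ∑ σ ∈ univ.filter (fun σ : Perm (Fin n) => Avoids σ τ), X ^ cr σ

lemma sum_filter_avoids_apply_eq_zero (j k : ℕ) :
    ∑ σ ∈ univ.filter (fun σ : Perm (Fin (j + 1 + k)) =>
        Avoids σ p312 ∧ σ ⟨j, by omega⟩ = ⟨0, by omega⟩), (X : ℤ[X]) ^ cr σ =
      crossingPoly p231 j * crossingPoly p312 k := by
  rw [crossingPoly, crossingPoly, sum_mul_sum, ← sum_product']
  refine (sum_bij (fun p _ => glue p.1 p.2) (fun p hp => ?_) (fun p _ q _ h => ?_)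
    (fun σ hσ => ?_) (fun p _ => by rw [cr_glue, pow_add])).symm
  · simp only [mem_product, mem_filter, mem_univ, true_and] at hp ⊢
    exact ⟨(avoids_glue_iff _ _).mpr hp, Fin.ext (glue_val_of_eq rfl)⟩
  · exact Prod.ext_iff.mpr (glue_injective _ _ h)
  · simp only [mem_filter, mem_univ, true_and] at hσ
    obtain ⟨α, β, rfl⟩ := exists_glue_eq_of_avoids hσ.1 hσ.2
    exact ⟨(α, β), by simpa using (avoids_glue_iff α β).mp hσ.1, rfl⟩

lemma sum_filter_avoids_symm_apply_zero (n j : ℕ) (hj : j < n) :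
    ∑ σ ∈ univ.filter (fun σ : Perm (Fin n) =>
        Avoids σ p312 ∧ (σ.symm ⟨0, by omega⟩ : ℕ) = j), (X : ℤ[X]) ^ cr σ =
      crossingPoly p231 j * crossingPoly p312 (n - 1 - j) := by
  obtain ⟨k, rfl⟩ : ∃ k, n = j + 1 + k := ⟨n - 1 - j, by omega⟩
  rw [show j + 1 + k - 1 - j = k by omega, ← sum_filter_avoids_apply_eq_zero]
  refine sum_congr (filter_congr fun σ _ => and_congr_right fun _ => ?_) fun _ _ => rfl
  rw [← Fin.ext_iff (b := ⟨j, hj⟩), symm_apply_eq, eq_comm]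

theorem stmt11 (n : ℕ) (hn : 1 ≤ n) :
    (∑ σ ∈ Finset.univ.filter (fun σ : Equiv.Perm (Fin n) => Avoids σ p312),
        (Polynomial.X : Polynomial ℤ) ^ cr σ)
      = ∑ j ∈ Finset.range n,
          (∑ α ∈ Finset.univ.filter (fun α : Equiv.Perm (Fin j) => Avoids α p231),
              (Polynomial.X : Polynomial ℤ) ^ cr α) *
          (∑ β ∈ Finset.univ.filter (fun β : Equiv.Perm (Fin (n - 1 - j)) => Avoids β p312),
              (Polynomial.X : Polynomial ℤ) ^ cr β) := by
  rw [← sum_fiberwise_of_maps_to (g := fun σ : Perm (Fin n) => (σ.symm ⟨0, hn⟩ : ℕ))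
    (t := range n) fun σ _ => mem_range.mpr (Fin.isLt _)]
  refine sum_congr rfl fun j hj => ?_
  rw [filter_filter]
  exact sum_filter_avoids_symm_apply_zero n j (mem_range.mp hj)
end

section
/- The number of permutations of [n] avoiding both 213 and 312 that have no crossings equals C(n,2) + 1 (the n-th central polygonal number). -/
open Finset Polynomial

/-!
Avoiding 213 and 312 means that no entry is smaller than an entry on each side of it, so the
permutation rises to its maximum and then falls. Let `σ` be such a noncrossing permutation of
`[n + 1]`. If `σ` fixes the first position, deleting that fixed point leaves one of `[n]`.
Otherwise the minimum sits at the last position; noncrossing forces `σ(i) ≤ i + 1` at every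
ascent, hence `σ(i) = i + 1` on the rising part, and the falling part must consist of the
remaining values in decreasing order. So `σ` is determined by the position of its maximum, one
of `n`, and the count `a` satisfies `a (n + 1) = a n + n`, `a 0 = 1`.
-/

open Equiv

variable {n : ℕ}

def IsValleyFree (σ : Perm (Fin n)) : Prop :=
  ∀ ⦃i j k : Fin n⦄, i < j → j < k → ¬ (σ j < σ i ∧ σ j < σ k)

def IsNoncrossing (σ : Perm (Fin n)) : Prop := ∀ i j, ¬ IsCross σ i j

instance : DecidablePred (IsValleyFree (n := n)) := fun _ => by
  unfold IsValleyFree; infer_instance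

instance : DecidablePred (IsNoncrossing (n := n)) := fun _ => by
  unfold IsNoncrossing; infer_instance

lemma avoids_p213_and_avoids_p312_iff (σ : Perm (Fin n)) :
    Avoids σ p213 ∧ Avoids σ p312 ↔ IsValleyFree σ := by
  simp only [Avoids, Contains3, p213, p312, IsValleyFree, Fin.isValue, Matrix.cons_val_zero,
    Matrix.cons_val_one, not_lt_zero, false_iff, not_lt, Matrix.cons_val, Fin.reduceLT, true_iff,
    exists_and_left, not_exists, not_and, Fin.lt_one_iff,
    Nat.reduceAdd, Fin.reduceEq, zero_lt_one]
  constructor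
  · rintro ⟨h213, h312⟩ i j k hij hjk hji
    rcases lt_or_gt_of_ne (σ.injective.ne (hij.trans hjk).ne) with hik | hki
    · exact h213 i j hij k hjk hji.le hik
    · exact h312 i j hij k hjk hji.le hki.le
  · intro h
    refine ⟨fun i j hij k hjk hji _ => h hij hjk ?_,
      fun i j hij k hjk hji _ => h hij hjk ?_⟩ <;> exact lt_of_le_of_ne hji (σ.injective.ne hij.ne')

lemma cr_eq_zero_iff (σ : Perm (Fin n)) : cr σ = 0 ↔ IsNoncrossing σ := by
  simp [cr, IsNoncrossing, filter_eq_empty_iff]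

def fixZero (τ : Perm (Fin n)) : Perm (Fin (n + 1)) := Perm.decomposeFin.symm (0, τ)

@[simp] lemma fixZero_zero (τ : Perm (Fin n)) : fixZero τ 0 = 0 :=
  Perm.decomposeFin_symm_apply_zero 0 τ

@[simp] lemma fixZero_succ (τ : Perm (Fin n)) (i : Fin n) : fixZero τ i.succ = (τ i).succ := by
  simp [fixZero, Perm.decomposeFin_symm_apply_succ]

lemma fixZero_injective : Function.Injective (fixZero (n := n)) := fun _ _ h =>
  (Prod.ext_iff.mp (Perm.decomposeFin.symm.injective h)).2

lemma exists_fixZero_eq {σ : Perm (Fin (n + 1))} (h : σ 0 = 0) : ∃ τ, fixZero τ = σ := by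
  obtain ⟨⟨a, τ⟩, rfl⟩ := Perm.decomposeFin.symm.surjective σ
  rw [Perm.decomposeFin_symm_apply_zero] at h
  exact ⟨τ, by rw [fixZero, h]⟩

lemma isNoncrossing_fixZero_iff (τ : Perm (Fin n)) :
    IsNoncrossing (fixZero τ) ↔ IsNoncrossing τ := by
  simp [IsNoncrossing, Fin.forall_fin_succ, IsCross]

lemma isValleyFree_fixZero_iff (τ : Perm (Fin n)) :
    IsValleyFree (fixZero τ) ↔ IsValleyFree τ := by
  simp [IsValleyFree, Fin.forall_fin_succ]

/-- In one-based one-line notation: `2, 3, …, m + 1, n + 1, n, …, m + 2, 1`. -/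
def peakFun (m : Fin n) (i : Fin (n + 1)) : Fin (n + 1) :=
  if h : (i : ℕ) < m then ⟨i + 1, by omega⟩
  else if (i : ℕ) = n then 0
  else ⟨n + m - i, by omega⟩

lemma val_peakFun (m : Fin n) (i : Fin (n + 1)) :
    (peakFun m i : ℕ) =
      if (i : ℕ) < m then (i : ℕ) + 1 else if (i : ℕ) = n then 0 else n + m - i := by
  unfold peakFun
  split_ifs <;> rfl

lemma peakFun_injective (m : Fin n) : Function.Injective (peakFun m) := by
  intro i j h
  have := congrArg Fin.val h
  simp only [val_peakFun] at this
  ext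
  split_ifs at this <;> omega

noncomputable def peakPerm (m : Fin n) : Perm (Fin (n + 1)) :=
  .ofBijective (peakFun m) (Finite.injective_iff_bijective.mp (peakFun_injective m))

lemma val_peakPerm (m : Fin n) (i : Fin (n + 1)) :
    (peakPerm m i : ℕ) =
      if (i : ℕ) < m then (i : ℕ) + 1 else if (i : ℕ) = n then 0 else n + m - i :=
  val_peakFun m i

lemma peakPerm_injective : Function.Injective (peakPerm (n := n)) := by
  intro m m' h
  have := congrArg Fin.val (DFunLike.congr_fun h m.castSucc)
  simp only [val_peakPerm, Fin.val_castSucc] at this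
  ext
  split_ifs at this <;> omega

lemma peakPerm_zero_ne_zero (m : Fin n) : peakPerm m 0 ≠ 0 := by
  have := m.isLt
  simp only [ne_eq, Fin.ext_iff, val_peakPerm, Fin.val_zero]
  grind

lemma isValleyFree_peakPerm (m : Fin n) : IsValleyFree (peakPerm m) := by
  intro i j k hij hjk h
  simp only [Fin.lt_def, val_peakPerm] at hij hjk h
  split_ifs at h <;> omega

lemma isNoncrossing_peakPerm (m : Fin n) : IsNoncrossing (peakPerm m) := by
  intro i j h
  simp only [IsCross, Fin.lt_def, val_peakPerm] at h
  split_ifs at h <;> omega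

lemma val_add_le_of_strictMonoOn {m k : ℕ} {f : Fin m → Fin k} {a b : Fin m} (hab : a ≤ b)
    (hf : StrictMonoOn f (Set.Icc a b)) : (f a : ℕ) + (b - a) ≤ f b := by
  obtain ⟨d, hd⟩ : ∃ d, (b : ℕ) = a + d := ⟨b - a, by rw [Fin.le_def] at hab; omega⟩
  induction d generalizing b with
  | zero => obtain rfl : b = a := Fin.ext hd; simp
  | succ d ih =>
    set c : Fin m := ⟨a + d, by omega⟩
    have hc : (c : ℕ) = a + d := rfl
    have hac : a ≤ c := Fin.le_def.mpr (by omega)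
    have hcb : c < b := Fin.lt_def.mpr (by omega)
    have h1 := ih hac (hf.mono (Set.Icc_subset_Icc_right hcb.le)) rfl
    have h2 := Fin.lt_def.mp (hf ⟨hac, hcb.le⟩ ⟨hab, le_rfl⟩ hcb)
    omega

lemma val_add_le_of_strictAntiOn {m k : ℕ} {f : Fin m → Fin k} {a b : Fin m} (hab : a ≤ b)
    (hf : StrictAntiOn f (Set.Icc a b)) : (f b : ℕ) + (b - a) ≤ f a := by
  have := val_add_le_of_strictMonoOn (f := Fin.rev ∘ f) hab
    fun x hx y hy hxy => Fin.rev_lt_rev.mpr (hf hx hy hxy)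
  simp only [Function.comp_apply, Fin.val_rev] at this
  have := (f a).isLt
  omega

lemma apply_lt_of_apply_eq_last {σ : Perm (Fin (n + 1))} {M i : Fin (n + 1)}
    (hM : σ M = Fin.last n) (hi : i ≠ M) : σ i < σ M :=
  hM ▸ (Fin.le_last _).lt_of_ne (hM ▸ σ.injective.ne hi)

namespace IsValleyFree

variable {σ : Perm (Fin (n + 1))}

lemma apply_last_eq_zero (hσ : IsValleyFree σ) (h0 : σ 0 ≠ 0) : σ (Fin.last n) = 0 := by
  set p := σ.symm 0
  have hp : σ p = 0 := σ.apply_symm_apply 0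
  by_contra hlast
  have hp0 : p ≠ 0 := fun h => h0 (h ▸ hp)
  have hpl : p ≠ Fin.last n := fun h => hlast (h ▸ hp)
  exact hσ (Fin.pos_of_ne_zero hp0) ((Fin.le_last p).lt_of_ne hpl)
    ⟨hp ▸ Fin.pos_of_ne_zero h0, hp ▸ Fin.pos_of_ne_zero hlast⟩

lemma strictMonoOn_Iic (hσ : IsValleyFree σ) {M : Fin (n + 1)} (hM : σ M = Fin.last n) :
    StrictMonoOn σ (Set.Iic M) := by
  intro i _ j hj hij
  by_contra h
  have hji : σ j < σ i := (not_lt.mp h).lt_of_ne (σ.injective.ne hij.ne')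
  rcases (Set.mem_Iic.mp hj).lt_or_eq with hjM | rfl
  · exact hσ hij hjM ⟨hji, apply_lt_of_apply_eq_last hM hjM.ne⟩
  · exact (apply_lt_of_apply_eq_last hM hij.ne).not_gt hji

lemma strictAntiOn_Ici (hσ : IsValleyFree σ) {M : Fin (n + 1)} (hM : σ M = Fin.last n) :
    StrictAntiOn σ (Set.Ici M) := by
  intro i hi j _ hij
  by_contra h
  have hij' : σ i < σ j := (not_lt.mp h).lt_of_ne (σ.injective.ne hij.ne)
  rcases (Set.mem_Ici.mp hi).lt_or_eq with hMi | rfl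
  · exact hσ hMi hij ⟨apply_lt_of_apply_eq_last hM hMi.ne', hij'⟩
  · exact (apply_lt_of_apply_eq_last hM hij.ne').not_gt hij'

end IsValleyFree

section Rigidity

variable {σ : Perm (Fin (n + 1))} {M : Fin (n + 1)}

lemma val_apply_of_lt_peak (hv : IsValleyFree σ) (hc : IsNoncrossing σ) (h0 : σ 0 ≠ 0)
    (hM : σ M = Fin.last n) {i : Fin (n + 1)} (hi : i < M) : (σ i : ℕ) = i + 1 := by
  have hmono := hv.strictMonoOn_Iic hM
  have hlow := val_add_le_of_strictMonoOn (Fin.zero_le i) (hmono.mono fun _ hx => hx.2.trans hi.le)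
  have hσ0 := Fin.lt_def.mp (Fin.pos_of_ne_zero h0)
  rw [Fin.lt_def] at hi
  set j : Fin (n + 1) := ⟨i + 1, by omega⟩
  have hj : (j : ℕ) = i + 1 := rfl
  have hij : i < j := Fin.lt_def.mpr (by omega)
  have hrise : σ i < σ j := hmono (Set.mem_Iic.mpr (Fin.le_def.mpr hi.le))
    (Set.mem_Iic.mpr (Fin.le_def.mpr (by omega))) hij
  have hup : ¬ (j : ℕ) < σ i := fun h => hc i j (Or.inl ⟨hij, h, hrise⟩)
  simp only [Fin.val_zero] at hlow hσ0
  omega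

lemma val_apply_of_peak_le (hv : IsValleyFree σ) (hc : IsNoncrossing σ) (h0 : σ 0 ≠ 0)
    (hM : σ M = Fin.last n) {i : Fin (n + 1)} (hMi : M ≤ i) (hin : (i : ℕ) < n) :
    (σ i : ℕ) = n + M - i := by
  have hanti := hv.strictAntiOn_Ici hM
  set p : Fin (n + 1) := ⟨n - 1, by omega⟩
  have hp : (p : ℕ) = n - 1 := rfl
  have hip : i ≤ p := Fin.le_def.mpr (by omega)
  have hup := val_add_le_of_strictAntiOn hMi (hanti.mono fun _ hx => hx.1)
  have hlow := val_add_le_of_strictAntiOn hip (hanti.mono fun _ hx => hMi.trans hx.1)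
  have hpM : (M : ℕ) < σ p := by
    by_contra! h
    rcases Nat.eq_zero_or_pos (σ p) with h' | h'
    · have hpl : p = Fin.last n :=
        σ.injective ((Fin.ext h').trans (hv.apply_last_eq_zero h0).symm)
      have := congrArg Fin.val hpl
      simp only [Fin.val_last] at this
      omega
    · set q : Fin (n + 1) := ⟨σ p - 1, by omega⟩
      have hq : (q : ℕ) = σ p - 1 := rfl
      have hσq := val_apply_of_lt_peak hv hc h0 hM (i := q) (Fin.lt_def.mpr (by omega))
      have := congrArg Fin.val (σ.injective (Fin.ext (by omega)) : q = p)
      rw [Fin.le_def] at hMi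
      omega
  rw [hM, Fin.val_last] at hup
  rw [Fin.le_def] at hMi
  omega

lemma exists_peakPerm_eq (hv : IsValleyFree σ) (hc : IsNoncrossing σ) (h0 : σ 0 ≠ 0) :
    ∃ m, peakPerm m = σ := by
  have hlast := hv.apply_last_eq_zero h0
  set M := σ.symm (Fin.last n)
  have hM : σ M = Fin.last n := σ.apply_symm_apply _
  have hMn : (M : ℕ) < n := Fin.val_lt_last fun h => by
    obtain rfl : n = 0 := Fin.last_eq_zero_iff.mp (hM.symm.trans (h ▸ hlast))
    exact h0 (Fin.fin_one_eq_zero _)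
  refine ⟨⟨M, hMn⟩, Equiv.ext fun i => Fin.ext ?_⟩
  rw [val_peakPerm]
  split_ifs with h1 h2
  · exact (val_apply_of_lt_peak hv hc h0 hM (Fin.lt_def.mpr h1)).symm
  · obtain rfl : i = Fin.last n := Fin.ext h2
    simp [hlast]
  · exact (val_apply_of_peak_le hv hc h0 hM (Fin.le_def.mpr (not_lt.mp h1)) (by omega)).symm

end Rigidity

lemma card_filter_fixZero_zero (n : ℕ) :
    #{σ : Perm (Fin (n + 1)) | (IsValleyFree σ ∧ IsNoncrossing σ) ∧ σ 0 = 0} =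
      #{τ : Perm (Fin n) | IsValleyFree τ ∧ IsNoncrossing τ} := by
  suffices h : ({σ | (IsValleyFree σ ∧ IsNoncrossing σ) ∧ σ 0 = 0} :
      Finset (Perm (Fin (n + 1)))) =
      ({τ | IsValleyFree τ ∧ IsNoncrossing τ} : Finset _).image fixZero by
    rw [h, card_image_of_injective _ fixZero_injective]
  ext σ
  simp only [mem_filter, mem_univ, true_and, mem_image]
  constructor
  · rintro ⟨⟨hv, hc⟩, h0⟩
    obtain ⟨τ, rfl⟩ := exists_fixZero_eq h0
    exact ⟨τ, ⟨(isValleyFree_fixZero_iff τ).mp hv, (isNoncrossing_fixZero_iff τ).mp hc⟩,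
      rfl⟩
  · rintro ⟨τ, ⟨hv, hc⟩, rfl⟩
    exact ⟨⟨(isValleyFree_fixZero_iff τ).mpr hv, (isNoncrossing_fixZero_iff τ).mpr hc⟩,
      fixZero_zero τ⟩

lemma card_filter_apply_zero_ne_zero (n : ℕ) :
    #{σ : Perm (Fin (n + 1)) | (IsValleyFree σ ∧ IsNoncrossing σ) ∧ ¬σ 0 = 0} = n := by
  suffices h : ({σ | (IsValleyFree σ ∧ IsNoncrossing σ) ∧ ¬σ 0 = 0} :
      Finset (Perm (Fin (n + 1)))) =
      univ.image peakPerm by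
    rw [h, card_image_of_injective _ peakPerm_injective, card_univ, Fintype.card_fin]
  ext σ
  simp only [mem_filter, mem_univ, true_and, mem_image]
  constructor
  · rintro ⟨⟨hv, hc⟩, h0⟩
    exact exists_peakPerm_eq hv hc h0
  · rintro ⟨m, rfl⟩
    exact ⟨⟨isValleyFree_peakPerm m, isNoncrossing_peakPerm m⟩, peakPerm_zero_ne_zero m⟩

theorem card_isValleyFree_isNoncrossing (n : ℕ) :
    #{σ : Perm (Fin n) | IsValleyFree σ ∧ IsNoncrossing σ} = n.choose 2 + 1 := by
  induction n with
  | zero => rfl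
  | succ n ih =>
    rw [← card_filter_add_card_filter_not fun σ : Perm (Fin (n + 1)) => σ 0 = 0,
      filter_filter, filter_filter, card_filter_fixZero_zero, card_filter_apply_zero_ne_zero, ih,
      Nat.choose_succ_succ', Nat.choose_one_right]
    ring

theorem stmt14 (n : ℕ) :
    (Finset.univ.filter (fun σ : Equiv.Perm (Fin n) =>
        Avoids σ p213 ∧ Avoids σ p312 ∧ cr σ = 0)).card = n.choose 2 + 1 := by
  simp_rw [← and_assoc, avoids_p213_and_avoids_p312_iff, cr_eq_zero_iff]
  exact card_isValleyFree_isNoncrossing n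
end

section
/- For all n, S_n(321,231) = B_{n,1}, i.e. a permutation σ of [n] avoids both 321 and 231 if and only if i − σ(i) ≤ 1 for all i ∈ [n]. -/
open Finset Polynomial

/-! 321 and 231 are exactly the patterns of length three ending with their minimum, so `σ`
avoids both iff no entry `σ l` is preceded by two larger entries. Among the `l` positions before
`l` at most `σ l` carry smaller values, so `σ l + 1 < l` produces two larger entries before `l`.
Conversely, if `k ≤ σ k + 1` for all `k`, the `σ l + 1` positions carrying values `≤ σ l` lie in
`{0, …, σ l + 1}`; two positions `i < j < l` carrying larger values would leave only `σ l` places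
for them. -/

namespace Equiv.Perm

variable {n : ℕ} (σ : Equiv.Perm (Fin n))

def HasTwoGreaterBefore (l : Fin n) : Prop :=
  ∃ i j, i < j ∧ j < l ∧ σ l < σ i ∧ σ l < σ j

theorem contains3_p321_or_contains3_p231_iff :
    Contains3 σ p321 ∨ Contains3 σ p231 ↔ ∃ l, σ.HasTwoGreaterBefore l := by
  constructor
  · rintro (⟨i, j, l, hij, hjl, -, hil, hjl'⟩ | ⟨i, j, l, hij, hjl, -, hil, hjl'⟩) <;>
    · simp only [p321, p231, Fin.isValue, Matrix.cons_val_zero, Matrix.cons_val_one,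
        Matrix.cons_val, not_lt_zero, false_iff, not_lt] at hil hjl'
      exact ⟨l, i, j, hij, hjl, hil.lt_of_ne (σ.injective.ne (hij.trans hjl).ne'),
        hjl'.lt_of_ne (σ.injective.ne hjl.ne')⟩
  · rintro ⟨l, i, j, hij, hjl, hi, hj⟩
    rcases lt_or_gt_of_ne (σ.injective.ne hij.ne) with hσ | hσ
    · exact .inr ⟨i, j, l, hij, hjl, by simp [p231, hσ, hi.not_gt, hj.not_gt]⟩
    · exact .inl ⟨i, j, l, hij, hjl, by simp [p321, hσ.not_gt, hi.not_gt, hj.not_gt]⟩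

theorem hasTwoGreaterBefore_of_add_one_lt {l : Fin n} (hl : (σ l : ℕ) + 1 < l) :
    σ.HasTwoGreaterBefore l := by
  have hsmaller : #((Iio l).filter fun k => ¬ σ l < σ k) ≤ σ l := by
    rw [← Fin.card_Iio (σ l)]
    refine card_le_card_of_injOn σ (fun k hk => ?_) σ.injective.injOn
    simp only [coe_filter, mem_Iio, Set.mem_ofPred_eq, not_lt] at hk
    exact mem_Iio.mpr (hk.2.lt_of_ne (σ.injective.ne hk.1.ne))
  have hG : 1 < #((Iio l).filter fun k => σ l < σ k) := by
    have := card_filter_add_card_filter_not (s := Iio l) (fun k => σ l < σ k)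
    rw [Fin.card_Iio] at this
    omega
  obtain ⟨a, ha, b, hb, hab⟩ := one_lt_card.mp hG
  simp only [mem_filter, mem_Iio] at ha hb
  rcases hab.lt_or_gt with h | h
  · exact ⟨a, b, h, hb.1, ha.2, hb.2⟩
  · exact ⟨b, a, h, ha.1, hb.2, ha.2⟩

theorem not_hasTwoGreaterBefore_of_forall_le_add_one (h : ∀ k : Fin n, (k : ℕ) ≤ σ k + 1)
    (l : Fin n) : ¬ σ.HasTwoGreaterBefore l := by
  rintro ⟨i, j, hij, hjl, hi, hj⟩
  have hij' : (i : ℕ) < j := hij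
  have hjl' : (j : ℕ) < l := hjl
  have hl := h l
  have : (σ l : ℕ) + 1 ≤ σ l := calc
    (σ l : ℕ) + 1 = #(Iic (σ l)) := (Fin.card_Iic _).symm
    _ ≤ #(range (σ l + 2) \ {(i : ℕ), (j : ℕ)}) := by
      refine card_le_card_of_injOn (fun v => (σ.symm v : ℕ)) (fun v hv => ?_)
        (Fin.val_injective.comp σ.symm.injective).injOn
      have hk := h (σ.symm v)
      have hv : v ≤ σ l := by simpa using hv
      have hki : σ.symm v ≠ i := fun e => hi.not_ge (by rwa [← e, apply_symm_apply])
      have hkj : σ.symm v ≠ j := fun e => hj.not_ge (by rwa [← e, apply_symm_apply])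
      simp only [apply_symm_apply] at hk
      simp only [coe_sdiff, Set.mem_sdiff, coe_range, Set.mem_Iio, coe_insert, coe_singleton,
        Set.mem_insert_iff, Set.mem_singleton_iff, Fin.val_inj]
      exact ⟨by rw [Fin.le_def] at hv; omega, by tauto⟩
    _ = σ l := by
      have hij_mem : {(i : ℕ), (j : ℕ)} ⊆ range (σ l + 2) := by
        intro x
        simp only [mem_insert, mem_singleton, mem_range]
        omega
      rw [card_sdiff_of_subset hij_mem, card_pair hij'.ne, card_range, Nat.add_sub_cancel]
  omega

theorem exists_hasTwoGreaterBefore_iff :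
    (∃ l, σ.HasTwoGreaterBefore l) ↔ ∃ l : Fin n, (σ l : ℕ) + 1 < l := by
  refine ⟨fun ⟨l, hl⟩ => ?_, fun ⟨l, hl⟩ => ⟨l, σ.hasTwoGreaterBefore_of_add_one_lt hl⟩⟩
  by_contra! h
  exact σ.not_hasTwoGreaterBefore_of_forall_le_add_one h l hl

end Equiv.Perm

theorem stmt15 (n : ℕ) (σ : Equiv.Perm (Fin n)) :
    (Avoids σ p321 ∧ Avoids σ p231) ↔ ∀ i : Fin n, (i : ℕ) ≤ (σ i : ℕ) + 1 := by
  rw [Avoids, Avoids, ← not_or, σ.contains3_p321_or_contains3_p231_iff,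
    σ.exists_hasTwoGreaterBefore_iff]
  simp only [not_exists, not_lt]
end

section
/- For all n, ∑_{σ ∈ S_n(321,231)} y^{exc(σ)} = ∑_{k ≥ 0} C(n, 2k) y^k, where exc(σ) is the number of excedances. -/
open Finset Polynomial

/-- number of excedances -/
def exc {n : ℕ} (σ : Equiv.Perm (Fin n)) : ℕ :=
  (Finset.univ.filter (fun i : Fin n => i < σ i)).card

/-!
A permutation avoids 321 and 231 iff no entry has two larger entries to its left. If such a
permutation of `[n + 1]` starts with `m`, the values `0, …, m - 1` are then forced into positions
`1, …, m` in increasing order, so it is the direct sum of the block `[m, 0, 1, …, m - 1]` (one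
excedance if `m > 0`, none otherwise) and an arbitrary such permutation of the remaining `n - m`
positions. Hence `f (n + 1) = f n + y * ∑_{j < n} f j` for the excedance polynomials `f`, and
`∑_k C(n, 2k) y^k` satisfies the same recursion by Pascal's rule and the hockey-stick identity.
-/

open Equiv

def Contains321Or231 {n : ℕ} (σ : Perm (Fin n)) : Prop :=
  ∃ i j l : Fin n, i < j ∧ j < l ∧ σ l < σ i ∧ σ l < σ j

instance {n : ℕ} (σ : Perm (Fin n)) : Decidable (Contains321Or231 σ) := by
  unfold Contains321Or231; infer_instance

lemma avoids_321_and_231_iff {n : ℕ} (σ : Perm (Fin n)) :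
    Avoids σ p321 ∧ Avoids σ p231 ↔ ¬ Contains321Or231 σ := by
  have hne {x y : Fin n} (h : x < y) : σ x ≠ σ y := σ.injective.ne h.ne
  simp only [Avoids, Contains3, Contains321Or231, p321, p231, Fin.isValue, Matrix.cons_val_zero, Matrix.cons_val_one, Fin.lt_one_iff, Nat.reduceAdd,
    Fin.reduceEq, false_iff, not_lt, Matrix.cons_val, not_lt_zero, exists_and_left, not_exists,
    not_and, not_le, Fin.reduceLT, true_iff]
  constructor
  · rintro ⟨h321, h231⟩ i j hij l hjl hli
    by_contra! hlj
    rcases (hne hij).lt_or_gt with h | h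
    · exact absurd (h231 i j hij l hjl h hli.le) (not_lt.2 hlj.le)
    · exact absurd (h321 i j hij l hjl h.le hli.le) (not_lt.2 hlj.le)
  · intro h
    refine ⟨fun i j hij l hjl _ hli => ?_, fun i j hij l hjl _ hli => ?_⟩ <;>
    exact lt_of_le_of_ne (h i j hij l hjl (lt_of_le_of_ne hli (hne (hij.trans hjl)).symm)) (hne hjl)

@[simp] lemma Fin.castAdd_lt_castAdd_iff {a b : ℕ} {i j : Fin a} :
    Fin.castAdd b i < Fin.castAdd b j ↔ i < j := Iff.rfl

namespace Equiv.Perm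

def directSum {a b : ℕ} (α : Perm (Fin a)) (β : Perm (Fin b)) : Perm (Fin (a + b)) :=
  finSumFinEquiv.permCongr (α.sumCongr β)

variable {a b : ℕ} (α : Perm (Fin a)) (β : Perm (Fin b))

@[simp] lemma directSum_castAdd (i : Fin a) :
    α.directSum β (Fin.castAdd b i) = Fin.castAdd b (α i) := by
  simp [directSum, permCongr_apply]

@[simp] lemma directSum_natAdd (j : Fin b) :
    α.directSum β (Fin.natAdd a j) = Fin.natAdd a (β j) := by
  simp [directSum, permCongr_apply]

lemma directSum_right_injective :
    Function.Injective (α.directSum : Perm (Fin b) → Perm (Fin (a + b))) := by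
  intro β β' h
  ext j
  simpa using congrArg (fun σ : Perm (Fin (a + b)) => (σ (Fin.natAdd a j) : ℕ)) h

end Equiv.Perm

section directSum

open Perm

variable {a b : ℕ} (α : Perm (Fin a)) (β : Perm (Fin b))

lemma exc_directSum : exc (α.directSum β) = exc α + exc β := by
  simp only [exc, card_filter, Fin.sum_univ_add, directSum_castAdd, directSum_natAdd,
    Fin.natAdd_lt_natAdd_iff]
  rfl

lemma contains321Or231_directSum_iff :
    Contains321Or231 (α.directSum β) ↔ Contains321Or231 α ∨ Contains321Or231 β := by
  constructor
  · rintro ⟨i, j, l, hij, hjl, hli, hlj⟩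
    induction i using Fin.addCases <;> induction j using Fin.addCases <;>
      induction l using Fin.addCases <;>
      simp only [directSum_castAdd, directSum_natAdd, Fin.castAdd_lt_castAdd_iff,
        Fin.natAdd_lt_natAdd_iff] at hij hjl hli hlj
    -- every value of `α` lies below every value of `β`, so a mixed triple is impossible
    all_goals first
      | exact Or.inl ⟨_, _, _, hij, hjl, hli, hlj⟩
      | exact Or.inr ⟨_, _, _, hij, hjl, hli, hlj⟩
      | simp only [Fin.lt_def, Fin.val_castAdd, Fin.val_natAdd] at *; omega
  · rintro (⟨i, j, l, hij, hjl, hli, hlj⟩ | ⟨i, j, l, hij, hjl, hli, hlj⟩)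
    · exact ⟨Fin.castAdd b i, Fin.castAdd b j, Fin.castAdd b l, by simp [*]⟩
    · exact ⟨Fin.natAdd a i, Fin.natAdd a j, Fin.natAdd a l, by simp [*]⟩

end directSum

-- `(Fin.cycleRange (Fin.last m)).symm` is `[m, 0, 1, …, m - 1]` in one-line notation.
lemma exc_cycleRange_last_symm (m : ℕ) :
    exc (Fin.cycleRange (Fin.last m)).symm = if m = 0 then 0 else 1 := by
  rw [exc, card_filter, Fin.sum_univ_succ]
  simp only [Fin.cycleRange_symm_zero, Fin.cycleRange_symm_succ, Fin.succAbove_last,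
    Fin.castSucc_lt_succ.not_gt, if_false, sum_const_zero, add_zero]
  simp [Fin.lt_def, Nat.pos_iff_ne_zero]

lemma not_contains321Or231_cycleRange_last_symm (m : ℕ) :
    ¬ Contains321Or231 (Fin.cycleRange (Fin.last m)).symm := by
  rintro ⟨i, j, l, hij, hjl, -, hlj⟩
  cases j using Fin.cases with
  | zero => exact Fin.not_lt_zero i hij
  | succ j =>
    cases l using Fin.cases with
    | zero => exact Fin.not_lt_zero _ hjl
    | succ l =>
      simp only [Fin.cycleRange_symm_succ, Fin.succAbove_last, Fin.castSucc_lt_castSucc_iff] at hlj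
      exact hlj.not_gt (Fin.succ_lt_succ_iff.1 hjl)

lemma val_apply_add_one_eq_of_le_apply_zero {N : ℕ} {σ : Perm (Fin N)} (hσ : ¬ Contains321Or231 σ)
    (z : Fin N) (hz : (z : ℕ) = 0) (x : Fin N) (hx0 : 0 < (x : ℕ)) (hxz : (x : ℕ) ≤ σ z) :
    (σ x : ℕ) + 1 = x := by
  induction hv : (x : ℕ) using Nat.strong_induction_on generalizing x with
  | _ v ih =>
  have below (y : Fin N) (hy0 : 0 < (y : ℕ)) (hyx : (y : ℕ) < x) : (σ y : ℕ) + 1 = y :=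
    ih y (hv ▸ hyx) y hy0 (by omega) rfl
  obtain ⟨p, hp⟩ : ∃ p, (σ p : ℕ) = (x : ℕ) - 1 := ⟨σ.symm ⟨x - 1, by omega⟩, by simp⟩
  have hzp : z ≠ p := by rintro rfl; omega
  have hxp : (x : ℕ) ≤ p := by
    by_contra! hpx
    have := below p (Nat.pos_of_ne_zero fun h => hzp (Fin.ext (hz.trans h.symm))) hpx
    omega
  rcases hxp.eq_or_lt with hxp | hxp
  · obtain rfl : x = p := Fin.ext hxp
    omega
  -- otherwise `x - 1` sits right of `x`, and `(z, x, p)` is a forbidden triple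
  exfalso
  have hσx : (x : ℕ) - 1 < σ x := by
    by_contra! hσx
    rcases hσx.eq_or_lt with hσx | hσx
    · exact hxp.ne (congrArg Fin.val (σ.injective (Fin.ext (hσx.trans hp.symm))))
    · have hy := below ⟨σ x + 1, by omega⟩ (Nat.succ_pos _) (show (σ x : ℕ) + 1 < x by omega)
      have := congrArg Fin.val (σ.injective (Fin.ext (by simpa using hy) : σ ⟨σ x + 1, _⟩ = σ x))
      simp only at this
      omega
  exact hσ ⟨z, x, p, Fin.lt_def.2 (by omega), Fin.lt_def.2 hxp, Fin.lt_def.2 (by omega),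
    Fin.lt_def.2 (by omega)⟩

lemma exists_eq_directSum_of_apply_zero {m k : ℕ} {σ : Perm (Fin (m + 1 + k))}
    (hσ : ¬ Contains321Or231 σ) (h0 : σ (Fin.castAdd k 0) = Fin.castAdd k (Fin.last m)) :
    ∃ τ : Perm (Fin k), σ = Perm.directSum (Fin.cycleRange (Fin.last m)).symm τ := by
  have head (i : Fin (m + 1)) :
      σ (Fin.castAdd k i) = Fin.castAdd k ((Fin.cycleRange (Fin.last m)).symm i) := by
    cases i using Fin.cases with
    | zero => rwa [Fin.cycleRange_symm_zero]
    | succ j =>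
      have := val_apply_add_one_eq_of_le_apply_zero hσ (Fin.castAdd k 0) rfl (Fin.castAdd k j.succ) (by simp)
        (by rw [h0]; simp)
      ext
      simp only [Fin.val_castAdd, Fin.val_succ, Fin.cycleRange_symm_succ, Fin.succAbove_last,
        Fin.val_castSucc] at this ⊢
      omega
  let σ' := finSumFinEquiv.symm.permCongr σ
  have hmaps : Set.MapsTo σ' (Set.range Sum.inl) (Set.range Sum.inl) := by
    rintro _ ⟨i, rfl⟩
    exact ⟨(Fin.cycleRange (Fin.last m)).symm i, by simp [σ', permCongr_apply, head]⟩
  obtain ⟨⟨α, τ⟩, hατ⟩ := Perm.mem_sumCongrHom_range_of_perm_mapsTo_inl hmaps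
  have hσ_eq : σ = α.directSum τ := by
    rw [Perm.directSum, ← Perm.sumCongrHom_apply _ _ (α, τ), hατ]
    exact (finSumFinEquiv.permCongr.apply_symm_apply σ).symm
  refine ⟨τ, hσ_eq.trans (congrArg (Perm.directSum · τ) (Equiv.ext fun i => ?_))⟩
  simpa [hσ_eq] using head i

noncomputable def excPoly (n : ℕ) : ℤ[X] :=
  ∑ σ : Perm (Fin n) with ¬ Contains321Or231 σ, X ^ exc σ

lemma sum_filter_apply_zero_eq_mul_excPoly {N m k : ℕ} (h : m + 1 + k = N) :
    ∑ σ : Perm (Fin N) with ¬ Contains321Or231 σ ∧ (σ ⟨0, by omega⟩ : ℕ) = m, (X : ℤ[X]) ^ exc σ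
      = X ^ (if m = 0 then 0 else 1) * excPoly k := by
  subst h
  rw [excPoly, mul_sum]
  symm
  refine sum_bij (fun τ _ => Perm.directSum (Fin.cycleRange (Fin.last m)).symm τ) ?_
    (fun τ _ τ' _ => (Perm.directSum_right_injective _).eq_iff.1) ?_ ?_
  · intro τ hτ
    simp only [mem_filter, mem_univ, true_and] at hτ ⊢
    refine ⟨?_, ?_⟩
    · rw [contains321Or231_directSum_iff, not_or]
      exact ⟨not_contains321Or231_cycleRange_last_symm m, hτ⟩
    · exact congrArg Fin.val (Perm.directSum_castAdd _ τ 0) |>.trans (by simp)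
  · intro σ hσ
    simp only [mem_filter, mem_univ, true_and] at hσ
    obtain ⟨τ, rfl⟩ := exists_eq_directSum_of_apply_zero hσ.1 (Fin.ext hσ.2)
    refine ⟨τ, ?_, rfl⟩
    simp only [mem_filter, mem_univ, true_and]
    exact fun hτ => hσ.1 ((contains321Or231_directSum_iff _ _).2 (Or.inr hτ))
  · intro τ _
    rw [exc_directSum, exc_cycleRange_last_symm, pow_add, mul_comm]

lemma excPoly_succ (n : ℕ) :
    excPoly (n + 1) = excPoly n + X * ∑ j ∈ range n, excPoly j := by
  rw [excPoly, ← sum_fiberwise_of_maps_to (t := range (n + 1))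
    (g := fun σ : Perm (Fin (n + 1)) => (σ 0 : ℕ)) (fun σ _ => mem_range.2 (σ 0).isLt)]
  simp only [filter_filter]
  rw [sum_congr rfl fun m hm =>
    sum_filter_apply_zero_eq_mul_excPoly (N := n + 1) (k := n - m) (by rw [mem_range] at hm; omega)]
  rw [sum_range_succ', mul_sum, ← sum_range_reflect, add_comm]
  refine congrArg₂ (· + ·) (by simp) (sum_congr rfl fun j hj => ?_)
  have : n - (n - 1 - j + 1) = j := by rw [mem_range] at hj; omega
  rw [if_neg (Nat.succ_ne_zero _), pow_one, this]

noncomputable def evenChoosePoly (n : ℕ) : ℤ[X] :=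
  ∑ k ∈ range (n + 1), (n.choose (2 * k) : ℤ[X]) * X ^ k

lemma coeff_evenChoosePoly (n i : ℕ) : (evenChoosePoly n).coeff i = n.choose (2 * i) := by
  simp only [evenChoosePoly, finsetSum_coeff, coeff_natCast_mul, coeff_X_pow, mul_ite, mul_one,
    mul_zero, sum_ite_eq, mem_range]
  split_ifs with hi
  · rfl
  · rw [Nat.choose_eq_zero_of_lt (by omega), Nat.cast_zero]

lemma sum_range_choose_eq_choose_succ (n r : ℕ) :
    ∑ j ∈ range n, j.choose r = n.choose (r + 1) := by
  induction n with
  | zero => simp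
  | succ n ih => rw [sum_range_succ, ih, Nat.choose_succ_succ', add_comm]

lemma evenChoosePoly_succ (n : ℕ) :
    evenChoosePoly (n + 1) = evenChoosePoly n + X * ∑ j ∈ range n, evenChoosePoly j := by
  ext (_ | i)
  · simp [coeff_evenChoosePoly]
  · simp only [coeff_evenChoosePoly, coeff_add, coeff_X_mul, finsetSum_coeff]
    rw [← Nat.cast_sum, sum_range_choose_eq_choose_succ, ← Nat.cast_add, mul_add, mul_one,
      Nat.choose_succ_succ', add_comm]

lemma excPoly_zero : excPoly 0 = 1 := by
  simp [excPoly, exc, Contains321Or231]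

lemma excPoly_eq_evenChoosePoly (n : ℕ) : excPoly n = evenChoosePoly n := by
  induction n using Nat.strong_induction_on with
  | _ n ih =>
    cases n with
    | zero => simp [excPoly_zero, evenChoosePoly]
    | succ n =>
      rw [excPoly_succ, evenChoosePoly_succ, ih n n.lt_succ_self,
        sum_congr rfl fun j hj => ih j (Nat.lt_succ_of_lt (mem_range.1 hj))]

theorem stmt17 (n : ℕ) :
    (∑ σ ∈ Finset.univ.filter
        (fun σ : Equiv.Perm (Fin n) => Avoids σ p321 ∧ Avoids σ p231),
      (Polynomial.X : Polynomial ℤ) ^ exc σ)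
      = ∑ k ∈ Finset.range (n + 1),
          (n.choose (2 * k) : Polynomial ℤ) * Polynomial.X ^ k := by
  rw [filter_congr fun σ _ => avoids_321_and_231_iff σ]
  exact excPoly_eq_evenChoosePoly n
end

section
/- For all n, ∑_{σ ∈ S_n(321,231)} y^{des(σ)} = ∑_{σ ∈ S_n(321,231)} y^{exc(σ)}, where des(σ) = |{i < n : σ(i) > σ(i+1)}| and exc(σ) = |{i : σ(i) > i}|. -/
/-!
For `σ ∈ S_n(321, 231)` the descent set equals the excedance set, so `des σ = exc σ` and the
two sums agree term by term. If `σ (i + 1) < σ i ≤ i`, then `σ` cannot map `{0, …, i}` into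
itself (that set would have to contain `i + 1`), so some `k < i` has `σ k > i`, and
`k, i, i + 1` is a `321`. If `i < σ i < σ (i + 1)`, then `σ⁻¹` cannot map `{0, …, i}` into
itself, so some `l > i + 1` has `σ l ≤ i`, and `i, i + 1, l` is a `231`.
-/

open Finset Polynomial

/-- number of descents -/
def des {n : ℕ} (σ : Equiv.Perm (Fin n)) : ℕ :=
  (Finset.univ.filter (fun p : Fin n × Fin n =>
    (p.2 : ℕ) = (p.1 : ℕ) + 1 ∧ σ p.2 < σ p.1)).card

namespace Equiv.Perm

variable {n : ℕ} {σ : Perm (Fin n)} {i j l : Fin n}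

theorem contains3_p321 (hij : i < j) (hjl : j < l) (hji : σ j < σ i) (hlj : σ l < σ j) :
    Contains3 σ p321 :=
  ⟨i, j, l, hij, hjl, iff_of_false (by decide) hji.asymm,
    iff_of_false (by decide) (hlj.trans hji).asymm, iff_of_false (by decide) hlj.asymm⟩

theorem contains3_p231 (hij : i < j) (hjl : j < l) (hij' : σ i < σ j) (hli : σ l < σ i) :
    Contains3 σ p231 :=
  ⟨i, j, l, hij, hjl, iff_of_true (by decide) hij',
    iff_of_false (by decide) hli.asymm, iff_of_false (by decide) (hli.trans hij').asymm⟩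

theorem lt_apply_of_apply_lt (h321 : Avoids σ p321) (hij : i < j) (hji : σ j < σ i) :
    i < σ i := by
  by_contra! hi
  by_cases hpres : ∀ k, k ≤ i → σ k ≤ i
  · have hj : σ.symm (σ j) ≤ i := perm_symm_on_of_perm_on_finite hpres (hji.le.trans hi)
    rw [symm_apply_apply] at hj
    exact hij.not_ge hj
  · push Not at hpres
    obtain ⟨k, hki, hk⟩ := hpres
    have hki : k < i := hki.lt_of_ne (by rintro rfl; exact hk.not_ge hi)
    exact h321 (contains3_p321 hki hij (hi.trans_lt hk) hji)

theorem apply_lt_of_lt_apply (h231 : Avoids σ p231) (hi : i < σ i) (hj : (j : ℕ) = i + 1) :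
    σ j < σ i := by
  by_contra! hij
  have hij : σ i < σ j := hij.lt_of_ne (σ.injective.ne (by rw [Ne, Fin.ext_iff]; omega))
  by_cases hpres : ∀ l, σ l ≤ i → l ≤ i
  · have : σ.symm.symm i ≤ i :=
      perm_symm_on_of_perm_on_finite (p := (· ≤ i))
        (fun k hk => hpres _ (by simpa using hk)) le_rfl
    exact hi.not_ge this
  · push Not at hpres
    obtain ⟨l, hli, hl⟩ := hpres
    have hjl : j < l := by
      have hjl : j ≠ l := by rintro rfl; exact hli.not_gt (hi.trans hij)
      rw [Fin.lt_def] at hl ⊢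
      rw [Ne, Fin.ext_iff] at hjl
      omega
    exact h231 (contains3_p231 (by rw [Fin.lt_def]; omega) hjl hij (hli.trans_lt hi))

theorem des_eq_card_filter (σ : Perm (Fin n)) :
    des σ = #{i : Fin n | ∃ j : Fin n, (j : ℕ) = i + 1 ∧ σ j < σ i} := by
  refine card_bij (fun p _ => p.1) ?_ ?_ ?_
  · simp only [mem_filter, mem_univ, true_and]
    exact fun p hp => ⟨p.2, hp⟩
  · simp only [mem_filter, mem_univ, true_and]
    exact fun p hp q hq hpq => Prod.ext hpq (Fin.ext (by rw [hp.1, hq.1, hpq]))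
  · simp only [mem_filter, mem_univ, true_and]
    exact fun i ⟨j, hj⟩ => ⟨(i, j), hj, rfl⟩

theorem des_eq_exc (h321 : Avoids σ p321) (h231 : Avoids σ p231) : des σ = exc σ := by
  rw [des_eq_card_filter, exc]
  congr 1
  ext i
  simp only [mem_filter, mem_univ, true_and]
  constructor
  · rintro ⟨j, hj, hji⟩
    exact lt_apply_of_apply_lt h321 (by rw [Fin.lt_def]; omega) hji
  · intro hi
    have hsucc : (i : ℕ) + 1 < n :=
      Nat.lt_of_le_of_lt (Fin.lt_def.mp hi) (σ i).isLt
    exact ⟨⟨i + 1, hsucc⟩, rfl, apply_lt_of_lt_apply h231 hi rfl⟩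

end Equiv.Perm

theorem stmt18 (n : ℕ) :
    (∑ σ ∈ Finset.univ.filter
        (fun σ : Equiv.Perm (Fin n) => Avoids σ p321 ∧ Avoids σ p231),
      (Polynomial.X : Polynomial ℤ) ^ des σ)
      = ∑ σ ∈ Finset.univ.filter
          (fun σ : Equiv.Perm (Fin n) => Avoids σ p321 ∧ Avoids σ p231),
        (Polynomial.X : Polynomial ℤ) ^ exc σ :=
  sum_congr rfl fun _ hσ => by
    rw [Equiv.Perm.des_eq_exc (mem_filter.mp hσ).2.1 (mem_filter.mp hσ).2.2]
end
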